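/- arXiv:1210.4444 — 9 statements merged into one kernel-verified Lean document; each statement's English description precedes it below -/
import Mathlib

section
/- Let α > 0 and define s_lin = (2/(3√6))·(2+√7)·√(√7−1)·α^{3/2}, ν_lin = −√((√7−1)/24)·α^{1/2} + i·√((√7+3)/8)·α^{1/2}, and λ_lin = i·(3+√7)·√((2+√7)/96)·α². Then (λ_lin, ν_lin) is a double root of the dispersion relation d_{s_lin}: namely d_{s_lin}(λ_lin, ν_lin) = 0 and ∂_ν d_{s_lin}(λ_lin, ν_lin) = 0, i.e. ν_lin⁴ + α·ν_lin² − s_lin·ν_lin + λ_lin = 0 and 4ν_lin³ + 2α·ν_lin − s_lin = 0; moreover Re λ_lin = 0 and Re ν_lin < 0. -/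
/-!
A pair `(λ, ν)` is a double root of `ν⁴ + αν² − sν + λ` exactly when `s = 4ν³ + 2αν` and
`λ = 3ν⁴ + αν²`, so every `ν` yields one. For `ν = −x + iy` with `x² = (√7 − 1)α/24` and
`y² = (√7 + 3)α/8` one gets `ν² = −(√7 + 5)α/12 − 2ixy`; with this, `4ν³ + 2αν` is real and
`3ν⁴ + αν²` is purely imaginary, and both match the given closed forms after simplifying the
square roots.
-/

open Complex

theorem dispersion_double_root_iff {R : Type*} [CommRing R] (α s ν l : R) :
    (ν ^ 4 + α * ν ^ 2 - s * ν + l = 0 ∧ 4 * ν ^ 3 + 2 * α * ν - s = 0) ↔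
      (s = 4 * ν ^ 3 + 2 * α * ν ∧ l = 3 * ν ^ 4 + α * ν ^ 2) := by
  constructor
  · rintro ⟨h, h'⟩
    exact ⟨by linear_combination -h', by linear_combination h - ν * h'⟩
  · rintro ⟨hs, hl⟩
    exact ⟨by linear_combination -ν * hs + hl, by linear_combination -hs⟩

section SpinodalPoint

variable {α r x y : ℂ}

theorem spinodal_sq (hx : x ^ 2 = (r - 1) / 24 * α) (hy : y ^ 2 = (r + 3) / 8 * α) :
    (-x + I * y) ^ 2 = -(r + 5) / 12 * α - 2 * I * x * y := by
  linear_combination hx - hy + y ^ 2 * I_sq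

theorem spinodal_deriv (hx : x ^ 2 = (r - 1) / 24 * α) (hy : y ^ 2 = (r + 3) / 8 * α) :
    4 * (-x + I * y) ^ 3 + 2 * α * (-x + I * y) = 4 / 3 * (2 + r) * x * α := by
  linear_combination 4 * (-x + I * y) * spinodal_sq hx hy + 8 * I * y * hx
    - 8 * x * y ^ 2 * I_sq + 8 * x * hy

theorem spinodal_lam (hr : r ^ 2 = 7) (hx : x ^ 2 = (r - 1) / 24 * α)
    (hy : y ^ 2 = (r + 3) / 8 * α) :
    3 * (-x + I * y) ^ 4 + α * (-x + I * y) ^ 2 = I * ((3 + r) * x * y * α) := by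
  rw [show (-x + I * y) ^ 4 = ((-x + I * y) ^ 2) ^ 2 by ring, spinodal_sq hx hy]
  linear_combination 12 * x ^ 2 * y ^ 2 * I_sq - 12 * y ^ 2 * hx - (r - 1) / 2 * α * hy
    - α ^ 2 / 24 * hr

end SpinodalPoint

theorem one_lt_sqrt_seven : 1 < √7 := by
  rw [Real.lt_sqrt zero_le_one]
  norm_num

theorem spinodal_speed_eq {α : ℝ} (hα : 0 ≤ α) :
    2 / (3 * √6) * (2 + √7) * √(√7 - 1) * α ^ ((3 : ℝ) / 2) =
      4 / 3 * (2 + √7) * (√((√7 - 1) / 24) * √α) * α := by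
  have h24 : √((√7 - 1) / 24) = √(√7 - 1) / (2 * √6) := by
    rw [Real.sqrt_div' _ (by norm_num : (0 : ℝ) ≤ 24), show (24 : ℝ) = 2 ^ 2 * 6 by norm_num,
      Real.sqrt_mul (by norm_num), Real.sqrt_sq (by norm_num)]
  have h32 : α ^ ((3 : ℝ) / 2) = √α * α := by
    rw [Real.sqrt_eq_rpow, ← Real.rpow_add_one' hα (by norm_num)]
    norm_num
  have h6 : 0 < √6 := by positivity
  rw [h24, h32]
  field_simp
  ring

theorem spinodal_lam_coeff_eq {α : ℝ} (hα : 0 ≤ α) :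
    (3 + √7) * √((2 + √7) / 96) * α ^ 2 =
      (3 + √7) * (√((√7 - 1) / 24) * √α) * (√((√7 + 3) / 8) * √α) * α := by
  have hprod : √((√7 - 1) / 24) * √((√7 + 3) / 8) = √((2 + √7) / 96) := by
    rw [← Real.sqrt_mul (by linarith [one_lt_sqrt_seven])]
    congr 1
    linear_combination Real.sq_sqrt (by norm_num : (0 : ℝ) ≤ 7) / 192
  calc (3 + √7) * √((2 + √7) / 96) * α ^ 2
      = (3 + √7) * (√((√7 - 1) / 24) * √((√7 + 3) / 8)) * (√α * √α) * α := by
        rw [hprod, Real.mul_self_sqrt hα]; ring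
    _ = (3 + √7) * (√((√7 - 1) / 24) * √α) * (√((√7 + 3) / 8) * √α) * α := by ring

/-- (λ_lin, ν_lin) is a double root of the dispersion relation
`d_{s_lin}(λ,ν) = -ν²(ν²+α) - λ + sν`, i.e. ν⁴ + αν² − s_lin ν + λ_lin = 0 and
4ν³ + 2αν − s_lin = 0; moreover Re λ_lin = 0 and Re ν_lin < 0. -/
theorem spinodal_double_root (α : ℝ) (hα : 0 < α)
    (s_lin : ℝ)
    (hs : s_lin = (2 / (3 * Real.sqrt 6)) * (2 + Real.sqrt 7) *
      Real.sqrt (Real.sqrt 7 - 1) * α ^ ((3 : ℝ) / 2))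
    (ν_lin : ℂ)
    (hν : ν_lin = Complex.ofReal (-(Real.sqrt ((Real.sqrt 7 - 1) / 24)) * Real.sqrt α)
      + Complex.I * Complex.ofReal (Real.sqrt ((Real.sqrt 7 + 3) / 8) * Real.sqrt α))
    (lam_lin : ℂ)
    (hlam : lam_lin = Complex.I *
      Complex.ofReal ((3 + Real.sqrt 7) * Real.sqrt ((2 + Real.sqrt 7) / 96) * α ^ 2)) :
    ν_lin ^ 4 + (α : ℂ) * ν_lin ^ 2 - (s_lin : ℂ) * ν_lin + lam_lin = 0 ∧
    4 * ν_lin ^ 3 + 2 * (α : ℂ) * ν_lin - (s_lin : ℂ) = 0 ∧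
    lam_lin.re = 0 ∧
    ν_lin.re < 0 := by
  obtain ⟨x, hxdef⟩ : ∃ x, x = √((√7 - 1) / 24) * √α := ⟨_, rfl⟩
  obtain ⟨y, hydef⟩ : ∃ y, y = √((√7 + 3) / 8) * √α := ⟨_, rfl⟩
  have h7 : 0 < (√7 - 1) / 24 := div_pos (sub_pos.2 one_lt_sqrt_seven) (by norm_num)
  have hr : (√7 : ℂ) ^ 2 = 7 := by exact_mod_cast Real.sq_sqrt (by norm_num : (0 : ℝ) ≤ 7)
  have hx : (x : ℂ) ^ 2 = (√7 - 1) / 24 * α := by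
    norm_cast; rw [hxdef, mul_pow, Real.sq_sqrt h7.le, Real.sq_sqrt hα.le]
  have hy : (y : ℂ) ^ 2 = (√7 + 3) / 8 * α := by
    norm_cast; rw [hydef, mul_pow, Real.sq_sqrt (by positivity), Real.sq_sqrt hα.le]
  have hν' : ν_lin = -(x : ℂ) + I * y := by rw [hν, neg_mul, ofReal_neg, hxdef, hydef]
  have hs' : (s_lin : ℂ) = 4 * ν_lin ^ 3 + 2 * α * ν_lin := by
    rw [hν', spinodal_deriv hx hy, hs, spinodal_speed_eq hα.le, ← hxdef]; push_cast; ring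
  have hlam' : lam_lin = 3 * ν_lin ^ 4 + α * ν_lin ^ 2 := by
    rw [hν', spinodal_lam hr hx hy, hlam, spinodal_lam_coeff_eq hα.le, ← hxdef, ← hydef]
    push_cast; ring
  obtain ⟨hroot, hderiv⟩ :=
    (dispersion_double_root_iff (α : ℂ) s_lin ν_lin lam_lin).2 ⟨hs', hlam'⟩
  refine ⟨hroot, hderiv, by rw [hlam, I_mul_re, ofReal_im, neg_zero], ?_⟩
  have hx0 : 0 < x := hxdef ▸ mul_pos (Real.sqrt_pos.2 h7) (Real.sqrt_pos.2 hα)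
  simpa [hν'] using hx0
end

section
/- Let s ∈ ℝ, ω ∈ ℝ with ω ≠ 0, and ℓ ∈ ℤ with ℓ ≠ 0. If u : ℝ → ℂ is four times continuously differentiable, bounded, and satisfies u''''(ξ) − s·u'(ξ) + iωℓ·u(ξ) = 0 for all ξ ∈ ℝ, then u is identically zero. -/
/-!
The characteristic polynomial `X⁴ - s X + i ω ℓ` has no root on the imaginary axis (the real
part of `(i y)⁴ - s (i y) + i ω ℓ` is `y⁴`) and no double root, so every solution is a
combination `∑ c_j exp (r_j ξ)` of four exponentials with `Re r_j ≠ 0`. Such a sum can only be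
bounded if all `c_j` vanish: replacing `f` by `f (ξ + h) - exp (r_j h) f ξ` removes the `j`-th
term, keeps the sum bounded and, for suitable `h`, keeps the other coefficients nonzero, while a
single exponential `c exp (r ξ)` with `Re r ≠ 0` is unbounded unless `c = 0`.
-/

open Complex Matrix Polynomial
open scoped Real

lemma re_ne_zero_of_quartic_root {a b z : ℂ} (ha : a.im = 0) (hb : b.re = 0) (hb0 : b ≠ 0)
    (hz : z ^ 4 - a * z + b = 0) : z.re ≠ 0 := by
  intro hre
  have hz' : z = z.im * I := by apply Complex.ext <;> simp [hre]
  rw [hz'] at hz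
  have him : z.im = 0 := by simpa [pow_succ, ha, hb] using congrArg re hz
  exact hb0 (by simpa [him] using hz)

lemma quartic_separable {a b : ℂ} (ha : a.im = 0) (hb : b.re = 0) (hb0 : b ≠ 0) :
    (X ^ 4 - C a * X + C b).Separable := by
  rw [Polynomial.Separable, isCoprime_iff_aeval_ne_zero_of_isAlgClosed (k := ℂ) ℂ]
  intro z
  by_contra! h
  obtain ⟨hroot, hderiv⟩ : z ^ 4 - a * z + b = 0 ∧ 4 * z ^ 3 - a = 0 := by
    norm_num at h
    exact h
  have haz : a * z = 4 / 3 * b := by linear_combination -(4 / 3) * hroot + z / 3 * hderiv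
  have hare : a.re * z.re = 0 := by simpa [ha, hb] using congrArg re haz
  have ha0 : a = 0 := Complex.ext
    ((mul_eq_zero.mp hare).resolve_right (re_ne_zero_of_quartic_root ha hb hb0 hroot)) ha
  have hz0 : z = 0 :=
    pow_eq_zero_iff (n := 3) (by norm_num) |>.mp (by linear_combination (hderiv + ha0) / 4)
  exact hb0 (by simpa [ha0, hz0] using hroot)

lemma exists_injective_quartic_roots {a b : ℂ} (ha : a.im = 0) (hb : b.re = 0) (hb0 : b ≠ 0) :
    ∃ r : Fin 4 → ℂ, Function.Injective r ∧ ∀ j, r j ^ 4 - a * r j + b = 0 := by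
  set p : ℂ[X] := X ^ 4 - C a * X + C b
  have hdeg : p.natDegree = 4 := by unfold p; compute_degree!
  have hcard : Fintype.card (p.rootSet ℂ) = 4 :=
    hdeg ▸ card_rootSet_eq_natDegree (quartic_separable ha hb hb0) (IsAlgClosed.splits _)
  set e := (Fintype.equivFinOfCardEq hcard).symm
  refine ⟨fun j => e j, Subtype.val_injective.comp e.injective, fun j => ?_⟩
  simpa [p] using (mem_rootSet.mp (e j).2).2

lemma ContDiff.hasDerivAt_iteratedDeriv {𝕜 F : Type*} [NontriviallyNormedField 𝕜]
    [NormedAddCommGroup F] [NormedSpace 𝕜 F] {n k : ℕ} {f : 𝕜 → F} (hf : ContDiff 𝕜 n f)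
    (hk : k < n) (x : 𝕜) : HasDerivAt (iteratedDeriv k f) (iteratedDeriv (k + 1) f x) x := by
  rw [iteratedDeriv_succ]
  exact ((hf.differentiable_iteratedDeriv k (mod_cast hk)) x).hasDerivAt

def quarticCompanion (a b : ℂ) : Matrix (Fin 4) (Fin 4) ℂ :=
  !![0, 1, 0, 0; 0, 0, 1, 0; 0, 0, 0, 1; -b, a, 0, 0]

lemma lipschitzWith_quarticCompanion_mulVec (a b : ℂ) :
    ∃ K, LipschitzWith K (quarticCompanion a b).mulVec :=
  ⟨_, (LinearMap.toContinuousLinearMap (quarticCompanion a b).mulVecLin).lipschitz⟩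

lemma quarticCompanion_mulVec_powers {a b r : ℂ} (hr : r ^ 4 - a * r + b = 0) :
    quarticCompanion a b *ᵥ (fun i : Fin 4 => r ^ (i : ℕ)) =
      r • fun i : Fin 4 => r ^ (i : ℕ) := by
  ext i
  fin_cases i <;> simp [quarticCompanion, vecHead, vecTail]
  · ring
  · ring
  · linear_combination -hr

lemma hasDerivAt_iteratedDeriv_pi_of_quartic_ode {a b : ℂ} {u : ℝ → ℂ} (hu : ContDiff ℝ 4 u)
    (hode : ∀ ξ : ℝ, iteratedDeriv 4 u ξ - a * deriv u ξ + b * u ξ = 0) (ξ : ℝ) :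
    HasDerivAt (fun x (i : Fin 4) => iteratedDeriv i u x)
      (quarticCompanion a b *ᵥ fun i : Fin 4 => iteratedDeriv i u ξ) ξ := by
  refine hasDerivAt_pi.mpr fun i => (hu.hasDerivAt_iteratedDeriv i.2 ξ).congr_deriv ?_
  fin_cases i <;> simp [quarticCompanion, vecHead, vecTail]
  linear_combination hode ξ

lemma hasDerivAt_exp_mul_ofReal (r : ℂ) (x : ℝ) :
    HasDerivAt (fun ξ : ℝ => exp (r * ξ)) (r * exp (r * x)) x := by
  simpa [mul_comm] using ((hasDerivAt_id (x : ℂ)).const_mul r).cexp.comp_ofReal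

lemma exists_eq_sum_mul_exp_of_quartic_ode {a b : ℂ} {u : ℝ → ℂ} (hu : ContDiff ℝ 4 u)
    (hode : ∀ ξ : ℝ, iteratedDeriv 4 u ξ - a * deriv u ξ + b * u ξ = 0)
    {r : Fin 4 → ℂ} (hr : Function.Injective r) (hroot : ∀ j, r j ^ 4 - a * r j + b = 0) :
    ∃ c : Fin 4 → ℂ, ∀ ξ : ℝ, u ξ = ∑ j, c j * exp (r j * ξ) := by
  obtain ⟨c, hc⟩ : ∃ c, c ᵥ* vandermonde r = fun i : Fin 4 => iteratedDeriv i u 0 :=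
    vecMul_surjective_iff_isUnit.mpr ((isUnit_iff_isUnit_det _).mpr
      (det_vandermonde_ne_zero_iff.mpr hr).isUnit) _
  set G : ℝ → Fin 4 → ℂ := fun ξ => ∑ j, (c j * exp (r j * ξ)) • fun i : Fin 4 => r j ^ (i : ℕ)
  -- `G` solves the same linear system as the jet of `u`, and `c` makes the initial values agree.
  have hG : ∀ ξ, HasDerivAt G (quarticCompanion a b *ᵥ G ξ) ξ := by
    intro ξ
    simp only [G, mulVec_sum, mulVec_smul, quarticCompanion_mulVec_powers (hroot _), smul_smul]
    refine HasDerivAt.fun_sum fun j _ => ?_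
    convert ((hasDerivAt_exp_mul_ofReal (r j) ξ).const_mul (c j)).smul_const
      (fun i : Fin 4 => r j ^ (i : ℕ)) using 2
    ring
  have hG0 : G 0 = fun i : Fin 4 => iteratedDeriv i u 0 := by
    rw [← hc]
    ext i
    simp [G, vecMul, dotProduct, vandermonde]
  obtain ⟨K, hK⟩ := lipschitzWith_quarticCompanion_mulVec a b
  have hYG := ODE_solution_unique_univ (v := fun _ => (quarticCompanion a b).mulVec)
    (s := fun _ => Set.univ) (fun _ => hK.lipschitzOnWith)
    (fun ξ => ⟨hasDerivAt_iteratedDeriv_pi_of_quartic_ode hu hode ξ, trivial⟩)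
    (fun ξ => ⟨hG ξ, trivial⟩) hG0.symm
  refine ⟨c, fun ξ => ?_⟩
  simpa [G] using congrFun (congrFun hYG ξ) 0

lemma eq_zero_of_bounded_mul_exp {c z : ℂ} (hz : z.re ≠ 0)
    (hbd : ∃ M : ℝ, ∀ ξ : ℝ, ‖c * exp (z * ξ)‖ ≤ M) : c = 0 := by
  obtain ⟨M, hM⟩ := hbd
  by_contra hc
  have hc : 0 < ‖c‖ := norm_pos_iff.mpr hc
  have key := hM (M / ‖c‖ / z.re)
  rw [norm_mul, norm_exp, re_mul_ofReal, mul_div_cancel₀ _ hz] at key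
  have := mul_le_mul_of_nonneg_left (Real.add_one_le_exp (M / ‖c‖)) hc.le
  rw [mul_add, mul_div_cancel₀ _ hc.ne'] at this
  linarith

lemma exists_forall_exp_mul_ne_one {ι : Type*} (S : Finset ι) (d : ι → ℂ)
    (hd : ∀ i ∈ S, d i ≠ 0) : ∃ h : ℝ, ∀ i ∈ S, exp (d i * h) ≠ 1 := by
  set N := ∑ i ∈ S, ‖d i‖
  have hN : 0 ≤ N := Finset.sum_nonneg fun i _ => norm_nonneg _
  refine ⟨π / (N + 1), fun i hi hexp => ?_⟩
  obtain ⟨n, hn⟩ := exp_eq_one_iff.mp hexp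
  have hstep : (π / (N + 1) : ℝ) ≠ 0 := by positivity
  have hn0 : n ≠ 0 := by
    rintro rfl
    rw [Int.cast_zero, zero_mul, mul_eq_zero, ofReal_eq_zero] at hn
    exact hn.elim (hd i hi) hstep
  have hdN : ‖d i‖ ≤ N := Finset.single_le_sum (fun j _ => norm_nonneg (d j)) hi
  have hlower : 2 * π ≤ ‖d i * (π / (N + 1) : ℝ)‖ := by
    rw [hn, norm_mul, norm_mul, norm_intCast, norm_I, mul_one, norm_mul, Complex.norm_real,
      Complex.norm_two, Real.norm_of_nonneg Real.pi_pos.le]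
    have : (1 : ℝ) ≤ |(n : ℝ)| := by exact_mod_cast Int.one_le_abs hn0
    nlinarith [Real.pi_pos]
  have hupper : ‖d i * (π / (N + 1) : ℝ)‖ < 2 * π := by
    rw [norm_mul, Complex.norm_real, Real.norm_of_nonneg (by positivity)]
    calc ‖d i‖ * (π / (N + 1)) ≤ N / (N + 1) * π := by
          rw [div_mul_eq_mul_div, mul_div_assoc]; gcongr
      _ < 1 * π := by gcongr; rw [div_lt_one (by positivity)]; linarith
      _ ≤ 2 * π := by linarith [Real.pi_pos]
  linarith

lemma eq_zero_of_bounded_sum_mul_exp {ι : Type*} [DecidableEq ι] {S : Finset ι} {z : ι → ℂ}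
    (hz : Set.InjOn z S) (hre : ∀ i ∈ S, (z i).re ≠ 0) {c : ι → ℂ}
    (hbd : ∃ M : ℝ, ∀ ξ : ℝ, ‖∑ i ∈ S, c i * exp (z i * ξ)‖ ≤ M) : ∀ i ∈ S, c i = 0 := by
  induction S using Finset.induction_on generalizing c with
  | empty => simp
  | insert j S hj ih =>
    obtain ⟨M, hM⟩ := hbd
    obtain ⟨h, hh⟩ := exists_forall_exp_mul_ne_one S (fun i => z i - z j) fun i hi hij =>
      hj (hz.eq_iff (Finset.mem_insert_of_mem hi) (Finset.mem_insert_self j S) |>.mp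
        (sub_eq_zero.mp hij) ▸ hi)
    have hshift : ∀ ξ : ℝ, ∑ i ∈ insert j S, c i * exp (z i * ↑(ξ + h)) -
        exp (z j * h) * ∑ i ∈ insert j S, c i * exp (z i * ξ) =
        ∑ i ∈ S, c i * (exp (z i * h) - exp (z j * h)) * exp (z i * ξ) := by
      intro ξ
      have hterm : ∀ i, c i * exp (z i * ↑(ξ + h)) - exp (z j * h) * (c i * exp (z i * ξ)) =
          c i * (exp (z i * h) - exp (z j * h)) * exp (z i * ξ) := by
        intro i
        push_cast
        rw [mul_add, Complex.exp_add]
        ring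
      rw [Finset.mul_sum, ← Finset.sum_sub_distrib, Finset.sum_insert hj]
      simp only [hterm, sub_self, mul_zero, zero_mul, zero_add]
    have hS : ∀ i ∈ S, c i = 0 := by
      have hshift_coeff := ih (hz.mono (Finset.coe_subset.mpr (Finset.subset_insert j S)))
        (fun i hi => hre i (Finset.mem_insert_of_mem hi))
        (c := fun i => c i * (exp (z i * h) - exp (z j * h)))
        ⟨M + ‖exp (z j * h)‖ * M, fun ξ => by
          rw [← hshift]
          exact (norm_sub_le _ _).trans (by rw [norm_mul]; gcongr; exacts [hM _, hM ξ])⟩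
      intro i hi
      refine (mul_eq_zero.mp (hshift_coeff i hi)).resolve_right fun he => hh i hi ?_
      rw [sub_mul, Complex.exp_sub, sub_eq_zero.mp he, div_self (Complex.exp_ne_zero _)]
    have hsum : ∀ ξ : ℝ, ∑ i ∈ insert j S, c i * exp (z i * ξ) = c j * exp (z j * ξ) := by
      intro ξ
      rw [Finset.sum_insert hj, Finset.sum_eq_zero fun i hi => by rw [hS i hi, zero_mul], add_zero]
    intro i hi
    rcases Finset.mem_insert.mp hi with rfl | hi
    · exact eq_zero_of_bounded_mul_exp (hre i hi) ⟨M, fun ξ => hsum ξ ▸ hM ξ⟩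
    · exact hS i hi

/-- Bounded C⁴ solutions of u'''' − s u' + iωℓ u = 0 vanish when ω ≠ 0, ℓ ≠ 0. -/
theorem bounded_solution_trivial (s ω : ℝ) (hω : ω ≠ 0) (ℓ : ℤ) (hℓ : ℓ ≠ 0)
    (u : ℝ → ℂ) (hreg : ContDiff ℝ 4 u)
    (hbd : ∃ M : ℝ, ∀ ξ : ℝ, ‖u ξ‖ ≤ M)
    (heq : ∀ ξ : ℝ, iteratedDeriv 4 u ξ - (s : ℂ) * deriv u ξ
      + Complex.I * (ω : ℂ) * (ℓ : ℂ) * u ξ = 0) :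
    ∀ ξ : ℝ, u ξ = 0 := by
  have hb : (Complex.I * (ω : ℂ) * (ℓ : ℂ)).re = 0 := by simp
  have hb0 : Complex.I * (ω : ℂ) * (ℓ : ℂ) ≠ 0 := by simp [hω, hℓ]
  obtain ⟨r, hr, hroot⟩ := exists_injective_quartic_roots (ofReal_im s) hb hb0
  obtain ⟨c, hc⟩ := exists_eq_sum_mul_exp_of_quartic_ode hreg heq hr hroot
  have hc0 : ∀ j ∈ Finset.univ, c j = 0 := eq_zero_of_bounded_sum_mul_exp hr.injOn
    (fun j _ => re_ne_zero_of_quartic_root (ofReal_im s) hb hb0 (hroot j))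
    (by simpa only [hc] using hbd)
  intro ξ
  simp [hc ξ, hc0 _ (Finset.mem_univ _)]
end

section
/- Let s, ω ∈ ℝ with s ≠ 0, and let u : ℝ × ℝ → ℝ be a smooth function, 2π-periodic in its second argument τ, satisfying the modulated traveling-wave equation ω·∂_τ u = −∂_ξ²(∂_ξ² u + u − u³) + s·∂_ξ u on ℝ × ℝ. Define θ(ξ,τ) = ∂_ξ² u + u − u³. Then the function I(ξ) = ∫₀^{2π} ( ∂_ξ θ(ξ,τ) − s·u(ξ,τ) ) dτ is constant in ξ. -/
open MeasureTheory Metric intervalIntegral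

private lemma pd_smooth {f : ℝ × ℝ → ℝ} (hf : ContDiff ℝ (⊤ : ℕ∞) f) (v : ℝ × ℝ) :
    ContDiff ℝ (⊤ : ℕ∞) (fun p => fderiv ℝ f p v) :=
  (hf.fderiv_right (le_refl _)).clm_apply contDiff_const

private lemma pd1_hasDerivAt {f : ℝ × ℝ → ℝ} (hf : ContDiff ℝ (⊤ : ℕ∞) f) (ξ τ : ℝ) :
    HasDerivAt (fun x => f (x, τ)) (fderiv ℝ f (ξ, τ) (1, 0)) ξ := by
  have h1 : HasDerivAt (fun x : ℝ => (x, τ)) ((1 : ℝ), (0 : ℝ)) ξ :=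
    (hasDerivAt_id ξ).prodMk (hasDerivAt_const ξ τ)
  exact ((hf.differentiable (by simp) (ξ, τ)).hasFDerivAt).comp_hasDerivAt ξ h1

private lemma pd2_hasDerivAt {f : ℝ × ℝ → ℝ} (hf : ContDiff ℝ (⊤ : ℕ∞) f) (ξ τ : ℝ) :
    HasDerivAt (fun t => f (ξ, t)) (fderiv ℝ f (ξ, τ) (0, 1)) τ := by
  have h1 : HasDerivAt (fun t : ℝ => (ξ, t)) ((0 : ℝ), (1 : ℝ)) τ :=
    (hasDerivAt_const τ ξ).prodMk (hasDerivAt_id τ)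
  exact ((hf.differentiable (by simp) (ξ, τ)).hasFDerivAt).comp_hasDerivAt τ h1

/-- For smooth solutions of the modulated traveling-wave equation
ω u_τ = −(u_ξξ + u − u³)_ξξ + s u_ξ, 2π-periodic in τ, the quantity
I(ξ) = ∫₀^{2π} (θ_ξ − s u) dτ with θ = u_ξξ + u − u³ is constant in ξ. -/
theorem conserved_quantity (s ω : ℝ) (hs : s ≠ 0)
    (u : ℝ → ℝ → ℝ)
    (hsmooth : ContDiff ℝ (⊤ : ℕ∞) (fun p : ℝ × ℝ => u p.1 p.2))
    (hper : ∀ ξ τ : ℝ, u ξ (τ + 2 * Real.pi) = u ξ τ)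
    (θ : ℝ → ℝ → ℝ)
    (hθ : ∀ ξ τ : ℝ, θ ξ τ =
      deriv (fun x => deriv (fun y => u y τ) x) ξ + u ξ τ - (u ξ τ) ^ 3)
    (heq : ∀ ξ τ : ℝ, ω * deriv (u ξ) τ =
      - deriv (fun x => deriv (fun y => θ y τ) x) ξ + s * deriv (fun x => u x τ) ξ) :
    ∀ ξ₁ ξ₂ : ℝ,
      (∫ τ in (0:ℝ)..(2 * Real.pi), (deriv (fun x => θ x τ) ξ₁ - s * u ξ₁ τ)) =
      (∫ τ in (0:ℝ)..(2 * Real.pi), (deriv (fun x => θ x τ) ξ₂ - s * u ξ₂ τ)) := by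
  set U : ℝ × ℝ → ℝ := fun p => u p.1 p.2 with hU
  -- first partial of u
  set Uξ : ℝ × ℝ → ℝ := fun p => fderiv ℝ U p (1, 0) with hUξ
  have hUξs : ContDiff ℝ (⊤ : ℕ∞) Uξ := pd_smooth hsmooth _
  have hUξd : ∀ ξ τ : ℝ, HasDerivAt (fun x => u x τ) (Uξ (ξ, τ)) ξ := fun ξ τ =>
    pd1_hasDerivAt hsmooth ξ τ
  have hUξe : ∀ ξ τ : ℝ, deriv (fun x => u x τ) ξ = Uξ (ξ, τ) := fun ξ τ =>
    (hUξd ξ τ).deriv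
  -- second partial (in ξ) of u
  set Uξξ : ℝ × ℝ → ℝ := fun p => fderiv ℝ Uξ p (1, 0) with hUξξ
  have hUξξd : ∀ ξ τ : ℝ, HasDerivAt (fun x => deriv (fun y => u y τ) x) (Uξξ (ξ, τ)) ξ := by
    intro ξ τ
    have : (fun x => deriv (fun y => u y τ) x) = fun x => Uξ (x, τ) := funext fun x => hUξe x τ
    rw [this]
    exact pd1_hasDerivAt hUξs ξ τ
  have hUξξe : ∀ ξ τ : ℝ, deriv (fun x => deriv (fun y => u y τ) x) ξ = Uξξ (ξ, τ) :=
    fun ξ τ => (hUξξd ξ τ).deriv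
  -- τ partial of u
  set Uτ : ℝ × ℝ → ℝ := fun p => fderiv ℝ U p (0, 1) with hUτ
  have hUτd : ∀ ξ τ : ℝ, HasDerivAt (u ξ) (Uτ (ξ, τ)) τ := fun ξ τ =>
    pd2_hasDerivAt hsmooth ξ τ
  have hUτe : ∀ ξ τ : ℝ, deriv (u ξ) τ = Uτ (ξ, τ) := fun ξ τ => (hUτd ξ τ).deriv
  have hUτs : ContDiff ℝ (⊤ : ℕ∞) Uτ := pd_smooth hsmooth _
  -- θ as a two-variable function
  set Θ : ℝ × ℝ → ℝ := fun p => θ p.1 p.2 with hΘ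
  have hΘeq : Θ = fun p => Uξξ p + U p - (U p) ^ 3 := by
    funext p
    simp only [hΘ, hθ p.1 p.2, hUξξe p.1 p.2, hU]
  have hΘs : ContDiff ℝ (⊤ : ℕ∞) Θ := by
    rw [hΘeq]
    exact ((pd_smooth hUξs _).add hsmooth).sub (hsmooth.pow 3)
  set Θξ : ℝ × ℝ → ℝ := fun p => fderiv ℝ Θ p (1, 0) with hΘξ
  have hΘξs : ContDiff ℝ (⊤ : ℕ∞) Θξ := pd_smooth hΘs _
  have hΘξd : ∀ ξ τ : ℝ, HasDerivAt (fun x => θ x τ) (Θξ (ξ, τ)) ξ := fun ξ τ =>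
    pd1_hasDerivAt hΘs ξ τ
  have hΘξe : ∀ ξ τ : ℝ, deriv (fun x => θ x τ) ξ = Θξ (ξ, τ) := fun ξ τ => (hΘξd ξ τ).deriv
  set Θξξ : ℝ × ℝ → ℝ := fun p => fderiv ℝ Θξ p (1, 0) with hΘξξ
  have hΘξξd : ∀ ξ τ : ℝ, HasDerivAt (fun x => Θξ (x, τ)) (Θξξ (ξ, τ)) ξ := fun ξ τ =>
    pd1_hasDerivAt hΘξs ξ τ
  have hΘξξe : ∀ ξ τ : ℝ, deriv (fun x => deriv (fun y => θ y τ) x) ξ = Θξξ (ξ, τ) := by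
    intro ξ τ
    have : (fun x => deriv (fun y => θ y τ) x) = fun x => Θξ (x, τ) := funext fun x => hΘξe x τ
    rw [this]
    exact (hΘξξd ξ τ).deriv
  -- the equation in terms of partials
  have heq' : ∀ ξ τ : ℝ, ω * Uτ (ξ, τ) = - Θξξ (ξ, τ) + s * Uξ (ξ, τ) := by
    intro ξ τ
    have := heq ξ τ
    rwa [hUτe, hΘξξe, hUξe] at this
  -- the quantity I
  set I : ℝ → ℝ := fun x => ∫ τ in (0:ℝ)..(2 * Real.pi), (Θξ (x, τ) - s * u x τ) with hI
  -- derivative of I is zero everywhere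
  have key : ∀ x₀ : ℝ, HasDerivAt I 0 x₀ := by
    intro x₀
    -- bound for the derivative on a compact set
    obtain ⟨C, hC⟩ : ∃ C, ∀ p ∈ (closedBall x₀ 1 ×ˢ Set.Icc (0:ℝ) (2 * Real.pi)),
        ‖-(ω * Uτ p)‖ ≤ C := by
      apply IsCompact.exists_bound_of_continuousOn
        ((isCompact_closedBall x₀ 1).prod isCompact_Icc)
      exact (((hUτs.continuous).const_smul ω).neg).continuousOn
    have hπ : (0:ℝ) ≤ 2 * Real.pi := by positivity
    have hIoc : Set.uIoc (0:ℝ) (2 * Real.pi) ⊆ Set.Icc (0:ℝ) (2 * Real.pi) := by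
      rw [Set.uIoc_of_le hπ]; exact Set.Ioc_subset_Icc_self
    have main := hasDerivAt_integral_of_dominated_loc_of_deriv_le
      (F := fun x t => Θξ (x, t) - s * u x t)
      (F' := fun x t => -(ω * Uτ (x, t)))
      (x₀ := x₀) (a := 0) (b := 2 * Real.pi) (bound := fun _ => C)
      (μ := volume) (s := ball x₀ 1) (ball_mem_nhds x₀ one_pos)
      (Filter.Eventually.of_forall fun x =>
        ((hΘξs.continuous.comp (Continuous.prodMk_right x)).sub
          ((continuous_const.mul (hsmooth.continuous.comp (Continuous.prodMk_right x))))).aestronglyMeasurable)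
      (((hΘξs.continuous.comp (Continuous.prodMk_right x₀)).sub
          ((continuous_const.mul (hsmooth.continuous.comp (Continuous.prodMk_right x₀))))).intervalIntegrable _ _)
      ((((hUτs.continuous.comp (Continuous.prodMk_right x₀)).const_smul ω).neg).aestronglyMeasurable)
      (Filter.Eventually.of_forall fun t ht x hx => by
        exact hC (x, t) ⟨ball_subset_closedBall hx, hIoc ht⟩)
      (intervalIntegrable_const)
      (Filter.Eventually.of_forall fun t ht x hx => by
        have h1 : HasDerivAt (fun y => Θξ (y, t) - s * u y t)
            (Θξξ (x, t) - s * Uξ (x, t)) x := (hΘξξd x t).sub ((hUξd x t).const_mul s)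
        have h2 : Θξξ (x, t) - s * Uξ (x, t) = -(ω * Uτ (x, t)) := by
          have := heq' x t; linarith
        rwa [h2] at h1)
    have hzero : (∫ t in (0:ℝ)..(2 * Real.pi), -(ω * Uτ (x₀, t))) = 0 := by
      have hftc : (∫ t in (0:ℝ)..(2 * Real.pi), Uτ (x₀, t)) =
          u x₀ (2 * Real.pi) - u x₀ 0 := by
        apply intervalIntegral.integral_eq_sub_of_hasDerivAt
        · intro t _; exact hUτd x₀ t
        · exact (hUτs.continuous.comp (Continuous.prodMk_right x₀)).intervalIntegrable _ _
      have hp : u x₀ (2 * Real.pi) = u x₀ 0 := by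
        have := hper x₀ 0; simpa using this
      rw [intervalIntegral.integral_neg]
      rw [show (fun t => ω * Uτ (x₀, t)) = fun t => ω * Uτ (x₀, t) from rfl]
      rw [intervalIntegral.integral_const_mul, hftc, hp]
      ring
    have := main.2
    rwa [hzero] at this
  have hconst : ∀ ξ₁ ξ₂ : ℝ, I ξ₁ = I ξ₂ := by
    intro ξ₁ ξ₂
    exact is_const_of_deriv_eq_zero (fun x => (key x).differentiableAt)
      (fun x => (key x).deriv) ξ₁ ξ₂
  intro ξ₁ ξ₂
  have hint : ∀ x : ℝ, (∫ τ in (0:ℝ)..(2 * Real.pi),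
      (deriv (fun y => θ y τ) x - s * u x τ)) = I x := by
    intro x
    apply intervalIntegral.integral_congr
    intro t _
    show deriv (fun y => θ y t) x - s * u x t = Θξ (x, t) - s * u x t
    rw [hΘξe x t]
  rw [hint ξ₁, hint ξ₂]
  exact hconst ξ₁ ξ₂
end

section
/- Let s, ω ∈ ℝ with s ≠ 0, and let u : ℝ × ℝ → ℝ be a smooth function, 2π-periodic in its second argument τ, satisfying ω·∂_τ u = −∂_ξ²(∂_ξ² u + u − u³) + s·∂_ξ u on ℝ × ℝ. Define θ = ∂_ξ² u + u − u³ and the energy E(ξ) = ∫₀^{2π} ( ½(∂_ξ u)² + ½u² − ¼u⁴ − (ω/s)·(∂_ξ u)(∂_τ u) − (1/s)·θ·∂_ξ θ ) dτ. Then E is differentiable with E'(ξ) = −(1/s)·∫₀^{2π} (∂_ξ θ(ξ,τ))² dτ; in particular, if s > 0 then E is nonincreasing. Moreover, if ∂_ξ θ vanishes identically on ℝ × ℝ, then s·∂_ξ u = ω·∂_τ u everywhere. -/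
open MeasureTheory Real

noncomputable def pd1 (F : ℝ × ℝ → ℝ) (p : ℝ × ℝ) : ℝ := fderiv ℝ F p (1, 0)
noncomputable def pd2 (F : ℝ × ℝ → ℝ) (p : ℝ × ℝ) : ℝ := fderiv ℝ F p (0, 1)

lemma contDiff_pd1 {F : ℝ × ℝ → ℝ} (hF : ContDiff ℝ (⊤ : ℕ∞) F) : ContDiff ℝ (⊤ : ℕ∞) (pd1 F) :=
  (ContinuousLinearMap.apply ℝ ℝ ((1:ℝ), (0:ℝ))).contDiff.comp (hF.fderiv_right (by simp))

lemma contDiff_pd2 {F : ℝ × ℝ → ℝ} (hF : ContDiff ℝ (⊤ : ℕ∞) F) : ContDiff ℝ (⊤ : ℕ∞) (pd2 F) :=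
  (ContinuousLinearMap.apply ℝ ℝ ((0:ℝ), (1:ℝ))).contDiff.comp (hF.fderiv_right (by simp))

lemma hasDerivAt_pd1 {F : ℝ × ℝ → ℝ} (hF : ContDiff ℝ (⊤ : ℕ∞) F) (ξ τ : ℝ) :
    HasDerivAt (fun x => F (x, τ)) (pd1 F (ξ, τ)) ξ := by
  have h := (hF.differentiable (by simp) (ξ, τ)).hasFDerivAt
  have hp : HasDerivAt (fun x : ℝ => (x, τ)) ((1:ℝ), (0:ℝ)) ξ :=
    (hasDerivAt_id ξ).prodMk (hasDerivAt_const ξ τ)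
  exact h.comp_hasDerivAt ξ hp

lemma hasDerivAt_pd2 {F : ℝ × ℝ → ℝ} (hF : ContDiff ℝ (⊤ : ℕ∞) F) (ξ τ : ℝ) :
    HasDerivAt (fun t => F (ξ, t)) (pd2 F (ξ, τ)) τ := by
  have h := (hF.differentiable (by simp) (ξ, τ)).hasFDerivAt
  have hp : HasDerivAt (fun t : ℝ => (ξ, t)) ((0:ℝ), (1:ℝ)) τ :=
    (hasDerivAt_const τ ξ).prodMk (hasDerivAt_id τ)
  exact h.comp_hasDerivAt τ hp

lemma pd_comm {F : ℝ × ℝ → ℝ} (hF : ContDiff ℝ (⊤ : ℕ∞) F) (p : ℝ × ℝ) :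
    pd1 (pd2 F) p = pd2 (pd1 F) p := by
  have hd1 : ContDiff ℝ (⊤ : ℕ∞) (fderiv ℝ F) := hF.fderiv_right (by simp)
  have hdf : HasFDerivAt (fderiv ℝ F) (fderiv ℝ (fderiv ℝ F) p) p :=
    (hd1.differentiable (by simp) p).hasFDerivAt
  have hsym := second_derivative_symmetric (f := F)
    (fun y => (hF.differentiable (by simp) y).hasFDerivAt) hdf
  have key : ∀ v w : ℝ × ℝ,
      fderiv ℝ (fun q => fderiv ℝ F q v) p w = fderiv ℝ (fderiv ℝ F) p w v := by
    intro v w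
    have h : HasFDerivAt (fun q => fderiv ℝ F q v)
        ((ContinuousLinearMap.apply ℝ ℝ v).comp (fderiv ℝ (fderiv ℝ F) p)) p :=
      (ContinuousLinearMap.apply ℝ ℝ v).hasFDerivAt.comp p hdf
    rw [h.fderiv]; rfl
  show fderiv ℝ (fun q => fderiv ℝ F q (0,1)) p (1,0)
      = fderiv ℝ (fun q => fderiv ℝ F q (1,0)) p (0,1)
  rw [key, key, hsym]

/-- For smooth solutions of the modulated traveling-wave equation
ω u_τ = −(u_ξξ + u − u³)_ξξ + s u_ξ, 2π-periodic in τ, the energy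
E(ξ) = ∫₀^{2π} (½ u_ξ² + ½ u² − ¼ u⁴ − (ω/s) u_ξ u_τ − (1/s) θ θ_ξ) dτ,
with θ = u_ξξ + u − u³, satisfies E'(ξ) = −(1/s) ∫₀^{2π} θ_ξ² dτ; in particular E is
nonincreasing if s > 0, and if θ_ξ ≡ 0 then s u_ξ = ω u_τ everywhere. -/
theorem energy_decreasing (s ω : ℝ) (hs : s ≠ 0)
    (u : ℝ → ℝ → ℝ)
    (hsmooth : ContDiff ℝ (⊤ : ℕ∞) (fun p : ℝ × ℝ => u p.1 p.2))
    (hper : ∀ ξ τ : ℝ, u ξ (τ + 2 * Real.pi) = u ξ τ)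
    (θ : ℝ → ℝ → ℝ)
    (hθ : ∀ ξ τ : ℝ, θ ξ τ =
      deriv (fun x => deriv (fun y => u y τ) x) ξ + u ξ τ - (u ξ τ) ^ 3)
    (heq : ∀ ξ τ : ℝ, ω * deriv (u ξ) τ =
      - deriv (fun x => deriv (fun y => θ y τ) x) ξ + s * deriv (fun x => u x τ) ξ)
    (E : ℝ → ℝ)
    (hE : ∀ ξ : ℝ, E ξ = ∫ τ in (0:ℝ)..(2 * Real.pi),
      (1 / 2 * (deriv (fun x => u x τ) ξ) ^ 2 + 1 / 2 * (u ξ τ) ^ 2 - 1 / 4 * (u ξ τ) ^ 4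
        - (ω / s) * (deriv (fun x => u x τ) ξ) * (deriv (u ξ) τ)
        - (1 / s) * θ ξ τ * deriv (fun x => θ x τ) ξ)) :
    (∀ ξ : ℝ, HasDerivAt E
      (-(1 / s) * ∫ τ in (0:ℝ)..(2 * Real.pi), (deriv (fun x => θ x τ) ξ) ^ 2) ξ) ∧
    (0 < s → ∀ ξ₁ ξ₂ : ℝ, ξ₁ ≤ ξ₂ → E ξ₂ ≤ E ξ₁) ∧
    ((∀ ξ τ : ℝ, deriv (fun x => θ x τ) ξ = 0) →
      ∀ ξ τ : ℝ, s * deriv (fun x => u x τ) ξ = ω * deriv (u ξ) τ) := by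
  set U : ℝ × ℝ → ℝ := fun p => u p.1 p.2 with hUdef
  set u₁ : ℝ × ℝ → ℝ := pd1 U with hu₁def
  set u₂ : ℝ × ℝ → ℝ := pd2 U with hu₂def
  have hu₁ : ContDiff ℝ (⊤ : ℕ∞) u₁ := contDiff_pd1 hsmooth
  have hu₂ : ContDiff ℝ (⊤ : ℕ∞) u₂ := contDiff_pd2 hsmooth
  have hderiv1 : ∀ ξ τ : ℝ, deriv (fun x => u x τ) ξ = u₁ (ξ, τ) :=
    fun ξ τ => (hasDerivAt_pd1 hsmooth ξ τ).deriv
  have hderiv2 : ∀ ξ τ : ℝ, deriv (u ξ) τ = u₂ (ξ, τ) :=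
    fun ξ τ => (hasDerivAt_pd2 hsmooth ξ τ).deriv
  set Θ : ℝ × ℝ → ℝ := fun p => pd1 u₁ p + U p - (U p) ^ 3 with hΘdef
  have hΘcd : ContDiff ℝ (⊤ : ℕ∞) Θ :=
    ((contDiff_pd1 hu₁).add hsmooth).sub (hsmooth.pow 3)
  have hθΘ : ∀ ξ τ : ℝ, θ ξ τ = Θ (ξ, τ) := by
    intro ξ τ
    rw [hθ]
    have h1 : (fun x => deriv (fun y => u y τ) x) = fun x => u₁ (x, τ) :=
      funext fun x => hderiv1 x τ
    rw [h1, (hasDerivAt_pd1 hu₁ ξ τ).deriv]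
  set Θ₁ : ℝ × ℝ → ℝ := pd1 Θ with hΘ₁def
  have hΘ₁cd : ContDiff ℝ (⊤ : ℕ∞) Θ₁ := contDiff_pd1 hΘcd
  have hθ₁ : ∀ ξ τ : ℝ, deriv (fun x => θ x τ) ξ = Θ₁ (ξ, τ) := by
    intro ξ τ
    have h1 : (fun x => θ x τ) = fun x => Θ (x, τ) := funext fun x => hθΘ x τ
    rw [h1]; exact (hasDerivAt_pd1 hΘcd ξ τ).deriv
  have hpde : ∀ ξ τ : ℝ, pd1 Θ₁ (ξ, τ) = s * u₁ (ξ, τ) - ω * u₂ (ξ, τ) := by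
    intro ξ τ
    have h := heq ξ τ
    rw [hderiv1, hderiv2] at h
    have h2 : (fun x => deriv (fun y => θ y τ) x) = fun x => Θ₁ (x, τ) :=
      funext fun x => hθ₁ x τ
    rw [h2, (hasDerivAt_pd1 hΘ₁cd ξ τ).deriv] at h
    linarith
  have hclair : ∀ p : ℝ × ℝ, pd1 u₂ p = pd2 u₁ p := pd_comm hsmooth
  set H : ℝ × ℝ → ℝ :=
    fun p => 1 / 2 * (U p) ^ 2 - 1 / 4 * (U p) ^ 4 - 1 / 2 * (u₁ p) ^ 2 with hHdef
  set H' : ℝ × ℝ → ℝ :=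
    fun p => U p * u₂ p - (U p) ^ 3 * u₂ p - u₁ p * pd2 u₁ p with hH'def
  have hH'deriv : ∀ ξ t : ℝ, HasDerivAt (fun t => H (ξ, t)) (H' (ξ, t)) t := by
    intro ξ t
    have hU := hasDerivAt_pd2 hsmooth ξ t
    have h1 := hasDerivAt_pd2 hu₁ ξ t
    have big := (((hU.pow 2).const_mul (1/2 : ℝ)).sub
      ((hU.pow 4).const_mul (1/4 : ℝ))).sub ((h1.pow 2).const_mul (1/2 : ℝ))
    refine big.congr_deriv ?_
    simp [hH'def]; ring
  set G : ℝ × ℝ → ℝ := fun p => 1 / 2 * (u₁ p) ^ 2 + 1 / 2 * (U p) ^ 2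
      - 1 / 4 * (U p) ^ 4 - (ω / s) * (u₁ p * u₂ p) - (1 / s) * (Θ p * Θ₁ p) with hGdef
  have hGcd : ContDiff ℝ (⊤ : ℕ∞) G :=
    ((((contDiff_const.mul (hu₁.pow 2)).add (contDiff_const.mul (hsmooth.pow 2))).sub
      (contDiff_const.mul (hsmooth.pow 4))).sub
      (contDiff_const.mul (hu₁.mul hu₂))).sub (contDiff_const.mul (hΘcd.mul hΘ₁cd))
  set G' : ℝ × ℝ → ℝ := fun p => (ω / s) * H' p - (1 / s) * (Θ₁ p) ^ 2 with hG'def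
  have hG'cont : Continuous G' := by
    apply Continuous.sub
    · exact continuous_const.mul (((hsmooth.continuous.mul hu₂.continuous).sub
        ((hsmooth.continuous.pow 3).mul hu₂.continuous)).sub
        (hu₁.continuous.mul (contDiff_pd2 hu₁).continuous))
    · exact continuous_const.mul (hΘ₁cd.continuous.pow 2)
  have hGderiv : ∀ τ ξ : ℝ, HasDerivAt (fun x => G (x, τ)) (G' (ξ, τ)) ξ := by
    intro τ ξ
    have hU := hasDerivAt_pd1 hsmooth ξ τ
    have h1 := hasDerivAt_pd1 hu₁ ξ τ
    have h2 := hasDerivAt_pd1 hu₂ ξ τ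
    have hT := hasDerivAt_pd1 hΘcd ξ τ
    have hT1 := hasDerivAt_pd1 hΘ₁cd ξ τ
    have big := (((((h1.pow 2).const_mul (1/2 : ℝ)).add
      ((hU.pow 2).const_mul (1/2 : ℝ))).sub
      ((hU.pow 4).const_mul (1/4 : ℝ))).sub
      ((h1.mul h2).const_mul (ω / s))).sub ((hT.mul hT1).const_mul (1 / s))
    refine big.congr_deriv ?_
    have e1 : pd1 u₁ (ξ, τ) = Θ (ξ, τ) - U (ξ, τ) + (U (ξ, τ)) ^ 3 := by
      simp [hΘdef]; ring
    rw [hG'def]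
    simp only [hH'def]
    rw [hpde ξ τ, hclair (ξ, τ), e1]
    push_cast
    field_simp
    ring
  -- periodicity facts
  have hUper : ∀ ξ : ℝ, U (ξ, 2 * π) = U (ξ, 0) := by
    intro ξ
    have := hper ξ 0
    simpa using this
  have hu₁per : ∀ ξ : ℝ, u₁ (ξ, 2 * π) = u₁ (ξ, 0) := by
    intro ξ
    have h1 : (fun x => u x (2 * π)) = fun x => u x 0 := by
      funext x
      have := hper x 0
      simpa using this
    rw [← hderiv1, ← hderiv1, h1]
  have hEG : ∀ ξ : ℝ, E ξ = ∫ τ in (0:ℝ)..(2 * π), G (ξ, τ) := by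
    intro ξ
    rw [hE]
    apply intervalIntegral.integral_congr
    intro τ _
    dsimp only
    rw [hderiv1, hderiv2, hθΘ, hθ₁, hGdef]
    ring
  have hGc : Continuous G := hGcd.continuous
  -- the main derivative computation
  have hval : ∀ ξ : ℝ, (∫ τ in (0:ℝ)..(2 * π), G' (ξ, τ))
      = -(1 / s) * ∫ τ in (0:ℝ)..(2 * π), (Θ₁ (ξ, τ)) ^ 2 := by
    intro ξ
    have hint1 : IntervalIntegrable (fun τ => (ω / s) * H' (ξ, τ)) volume 0 (2 * π) := by
      apply Continuous.intervalIntegrable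
      have : Continuous fun τ => H' (ξ, τ) := by
        have : Continuous H' := ((hsmooth.continuous.mul hu₂.continuous).sub
          ((hsmooth.continuous.pow 3).mul hu₂.continuous)).sub
          (hu₁.continuous.mul (contDiff_pd2 hu₁).continuous)
        exact this.comp (continuous_const.prodMk continuous_id)
      exact continuous_const.mul this
    have hint2 : IntervalIntegrable (fun τ => (1 / s) * (Θ₁ (ξ, τ)) ^ 2) volume 0 (2 * π) := by
      apply Continuous.intervalIntegrable
      exact continuous_const.mul ((hΘ₁cd.continuous.comp
        (continuous_const.prodMk continuous_id)).pow 2)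
    have hsplit : (∫ τ in (0:ℝ)..(2 * π), G' (ξ, τ))
        = (∫ τ in (0:ℝ)..(2 * π), (ω / s) * H' (ξ, τ))
          - ∫ τ in (0:ℝ)..(2 * π), (1 / s) * (Θ₁ (ξ, τ)) ^ 2 := by
      rw [← intervalIntegral.integral_sub hint1 hint2]
    have hH'int : IntervalIntegrable (fun τ => H' (ξ, τ)) volume 0 (2 * π) := by
      apply Continuous.intervalIntegrable
      have : Continuous H' := ((hsmooth.continuous.mul hu₂.continuous).sub
        ((hsmooth.continuous.pow 3).mul hu₂.continuous)).sub
        (hu₁.continuous.mul (contDiff_pd2 hu₁).continuous)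
      exact this.comp (continuous_const.prodMk continuous_id)
    have hftc : (∫ τ in (0:ℝ)..(2 * π), H' (ξ, τ)) = H (ξ, 2 * π) - H (ξ, 0) :=
      intervalIntegral.integral_eq_sub_of_hasDerivAt (fun t _ => hH'deriv ξ t) hH'int
    have hHper : H (ξ, 2 * π) = H (ξ, 0) := by
      rw [hHdef]; simp only [hUper ξ, hu₁per ξ]
    rw [hsplit, intervalIntegral.integral_const_mul, intervalIntegral.integral_const_mul,
      hftc, hHper]
    ring
  have part1 : ∀ ξ : ℝ, HasDerivAt E
      (-(1 / s) * ∫ τ in (0:ℝ)..(2 * Real.pi), (deriv (fun x => θ x τ) ξ) ^ 2) ξ := by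
    intro ξ₀
    obtain ⟨C, hC⟩ := ((isCompact_closedBall ξ₀ 1).prod
      (isCompact_uIcc (a := (0:ℝ)) (b := 2 * π))).exists_bound_of_continuousOn
      hG'cont.continuousOn
    have hmain := (intervalIntegral.hasDerivAt_integral_of_dominated_loc_of_deriv_le
      (F := fun x τ => G (x, τ)) (F' := fun x τ => G' (x, τ)) (x₀ := ξ₀)
      (bound := fun _ => C) (a := 0) (b := 2 * π) (μ := volume) (Metric.ball_mem_nhds ξ₀ one_pos)
      (Filter.Eventually.of_forall fun x =>
        ((hGc.comp (continuous_const.prodMk continuous_id)).aestronglyMeasurable))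
      ((hGc.comp (continuous_const.prodMk continuous_id)).intervalIntegrable _ _)
      ((hG'cont.comp (continuous_const.prodMk continuous_id)).aestronglyMeasurable)
      (Filter.Eventually.of_forall fun t ht x hx =>
        hC (x, t) ⟨Metric.ball_subset_closedBall hx, Set.uIoc_subset_uIcc ht⟩)
      intervalIntegrable_const
      (Filter.Eventually.of_forall fun t _ x _ => hGderiv t x)).2
    have hEfun : E = fun x => ∫ τ in (0:ℝ)..(2 * π), G (x, τ) := funext hEG
    rw [hEfun]
    refine hmain.congr_deriv ?_
    rw [hval ξ₀]
    congr 1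
    exact intervalIntegral.integral_congr fun τ _ => by rw [hθ₁]
  refine ⟨part1, ?_, ?_⟩
  · intro hspos ξ₁ ξ₂ h12
    have hdiff : Differentiable ℝ E := fun x => (part1 x).differentiableAt
    have hnonpos : ∀ x : ℝ, deriv E x ≤ 0 := by
      intro x
      rw [(part1 x).deriv]
      have hint : 0 ≤ ∫ τ in (0:ℝ)..(2 * π), (deriv (fun y => θ y τ) x) ^ 2 :=
        intervalIntegral.integral_nonneg (by positivity) (fun t _ => sq_nonneg _)
      have : -(1 / s) ≤ 0 := by
        have : 0 < 1 / s := by positivity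
        linarith
      exact mul_nonpos_of_nonpos_of_nonneg this hint
    exact antitone_of_deriv_nonpos hdiff hnonpos h12
  · intro hzero ξ τ
    have h := heq ξ τ
    have h1 : (fun x => deriv (fun y => θ y τ) x) = fun _ => (0:ℝ) :=
      funext fun x => hzero x τ
    rw [h1, deriv_const] at h
    linarith
end

section
/- For every m ∈ ℝ there exists a constant C(m) > 0, depending only on m (and which may be chosen to depend continuously on m), such that: for every μ ∈ ℝ and every 2π-periodic, twice continuously differentiable function u : ℝ → ℝ satisfying u'' + u − u³ = μ on ℝ and (1/2π)∫₀^{2π} u(x) dx = m, one has ∫₀^{2π} ( (u'(x))² + (u(x) − m)⁴ ) dx ≤ C(m). -/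
/-!
Put `v = u - m`, which has mean zero. Testing the equation against `v` and integrating by parts
over a period gives `∫ (u'² + v⁴) = ∫ ((1 - 3m²) v² - 3m v³)`: the multiplier `μ` and the
constant `m - m³` drop out because `∫ v = 0`. The right-hand integrand is at most
`v⁴/2 + (1 + 6m²)²`, and absorbing `½ ∫ v⁴` into the left yields the bound `4π (1 + 6m²)²`.
-/

open Function intervalIntegral Real

lemma sq_mul_sub_cube_le_quartic (m v : ℝ) :
    (1 - 3 * m ^ 2) * v ^ 2 - 3 * m * v ^ 3 ≤ v ^ 4 / 2 + (1 + 6 * m ^ 2) ^ 2 := by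
  nlinarith [sq_nonneg (v ^ 2 / 2 + 3 * m * v), sq_nonneg (v ^ 2 / 2 - (1 + 6 * m ^ 2))]

lemma Function.Periodic.deriv {f : ℝ → ℝ} {T : ℝ} (hf : Periodic f T) : Periodic (deriv f) T :=
  fun x => by rw [← deriv_comp_add_const, hf.funext]

lemma Function.Periodic.integral_mul_deriv_eq_neg {f g f' g' : ℝ → ℝ} {T : ℝ}
    (hf : Periodic f T) (hg : Periodic g T)
    (hff' : ∀ x, HasDerivAt f (f' x) x) (hgg' : ∀ x, HasDerivAt g (g' x) x)
    (hf' : Continuous f') (hg' : Continuous g') :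
    ∫ x in 0..T, f x * g' x = -∫ x in 0..T, f' x * g x := by
  rw [integral_mul_deriv_eq_deriv_mul (fun x _ => hff' x) (fun x _ => hgg' x)
    (hf'.intervalIntegrable _ _) (hg'.intervalIntegrable _ _)]
  have hfT : f T = f 0 := by simpa using hf 0
  have hgT : g T = g 0 := by simpa using hg 0
  rw [hfT, hgT, sub_self, zero_sub]

lemma integral_deriv_sq_add_quartic_eq {u : ℝ → ℝ} {T μ m : ℝ} (hu : ContDiff ℝ 2 u)
    (hper : Periodic u T) (hode : ∀ x, deriv (deriv u) x + u x - u x ^ 3 = μ)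
    (hmean : ∫ x in 0..T, (u x - m) = 0) :
    ∫ x in 0..T, (deriv u x ^ 2 + (u x - m) ^ 4) =
      ∫ x in 0..T, ((1 - 3 * m ^ 2) * (u x - m) ^ 2 - 3 * m * (u x - m) ^ 3) := by
  have hu' : ContDiff ℝ 1 (deriv u) := hu.deriv'
  have hu'' : Continuous (deriv (deriv u)) := hu'.continuous_deriv le_rfl
  have hc : Continuous u := hu.continuous
  have hc' : Continuous (deriv u) := hu'.continuous
  have hibp : ∫ x in 0..T, deriv u x * deriv u x =
      -∫ x in 0..T, deriv (deriv u) x * (u x - m) :=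
    hper.deriv.integral_mul_deriv_eq_neg (fun x => by simp only [hper x])
      (fun x => (hu'.differentiable one_ne_zero x).hasDerivAt)
      (fun x => ((hu.differentiable (by norm_num) x).hasDerivAt).sub_const m) hu'' hc'
  have hpoint : ∀ x, deriv u x ^ 2 + (u x - m) ^ 4 =
      (deriv u x * deriv u x + deriv (deriv u) x * (u x - m))
        + ((1 - 3 * m ^ 2) * (u x - m) ^ 2 - 3 * m * (u x - m) ^ 3)
        - (μ - m + m ^ 3) * (u x - m) := by
    intro x
    rw [← hode x]
    ring
  simp_rw [hpoint]
  rw [integral_sub, integral_add, integral_add, integral_const_mul, hmean, hibp]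
  · ring
  all_goals exact Continuous.intervalIntegrable (by fun_prop) _ _

/-- Uniform a priori bound, continuous in the mass m, on 2π-periodic
equilibria u'' + u − u³ = μ of mass m: ∫₀^{2π} ((u')² + (u − m)⁴) ≤ C(m). -/
theorem equilibria_apriori_bound :
    ∃ C : ℝ → ℝ, Continuous C ∧ ∀ m : ℝ, 0 < C m ∧
      ∀ (μ : ℝ) (u : ℝ → ℝ), ContDiff ℝ 2 u →
        Function.Periodic u (2 * Real.pi) →
        (∀ x : ℝ, deriv (deriv u) x + u x - (u x) ^ 3 = μ) →
        (1 / (2 * Real.pi)) * (∫ x in (0:ℝ)..(2 * Real.pi), u x) = m →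
        (∫ x in (0:ℝ)..(2 * Real.pi), ((deriv u x) ^ 2 + (u x - m) ^ 4)) ≤ C m := by
  refine ⟨fun m => 4 * π * (1 + 6 * m ^ 2) ^ 2, by fun_prop, fun m => ⟨by positivity, ?_⟩⟩
  intro μ u hu hper hode hmass
  have hc : Continuous u := hu.continuous
  have hc' : Continuous (deriv u) := hu.continuous_deriv one_le_two
  have hmean : ∫ x in 0..2 * π, (u x - m) = 0 := by
    rw [integral_sub (hc.intervalIntegrable _ _) intervalIntegrable_const, integral_const,
      smul_eq_mul, ← hmass]
    field_simp
    ring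
  have hquartic_le : ∫ x in 0..2 * π, (u x - m) ^ 4 ≤
      ∫ x in 0..2 * π, (deriv u x ^ 2 + (u x - m) ^ 4) :=
    integral_mono_on (by positivity) (Continuous.intervalIntegrable (by fun_prop) _ _)
      (Continuous.intervalIntegrable (by fun_prop) _ _)
      (fun x _ => le_add_of_nonneg_left (sq_nonneg _))
  have hbound : ∫ x in 0..2 * π, (deriv u x ^ 2 + (u x - m) ^ 4) ≤
      (∫ x in 0..2 * π, (u x - m) ^ 4) / 2 + 2 * π * (1 + 6 * m ^ 2) ^ 2 := by
    rw [integral_deriv_sq_add_quartic_eq hu hper hode hmean]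
    calc _ ≤ ∫ x in 0..2 * π, ((u x - m) ^ 4 / 2 + (1 + 6 * m ^ 2) ^ 2) :=
          integral_mono_on (by positivity) (Continuous.intervalIntegrable (by fun_prop) _ _)
            (Continuous.intervalIntegrable (by fun_prop) _ _)
            (fun x _ => sq_mul_sub_cube_le_quartic m (u x - m))
      _ = _ := by
          rw [integral_add (Continuous.intervalIntegrable (by fun_prop) _ _)
              intervalIntegrable_const,
            integral_div, integral_const, smul_eq_mul, sub_zero]
  linarith
end

section
/- Let α > 0, s > 0, ω > 0, and suppose k := ω/s > √α. If ℓ ∈ ℤ and ν ∈ ℂ satisfy ν⁴ + α·ν² − s·ν + iωℓ = 0 and Re ν = 0, then ℓ = 0 and ν = 0. -/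
/-!
On the imaginary axis ν = i y the real and imaginary parts of the dispersion relation decouple:
y²(y² − α) = 0 and ω ℓ = s y. The first forces |y| ≤ √α, so |ℓ| ω = s |y| ≤ s √α < ω, hence
ℓ = 0, and then s y = 0 gives y = 0.
-/

open Complex

lemma add_mul_I_eq_zero_iff (a b : ℝ) : (a : ℂ) + b * I = 0 ↔ a = 0 ∧ b = 0 := by
  rw [← mk_eq_add_mul_I, Complex.ext_iff]
  rfl

lemma dispersion_at_imaginary_iff (α s c y : ℝ) :
    (y * I) ^ 4 + (α : ℂ) * (y * I) ^ 2 - (s : ℂ) * (y * I) + I * c = 0 ↔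
      y ^ 2 * (y ^ 2 - α) = 0 ∧ c = s * y := by
  have hsplit : (y * I) ^ 4 + (α : ℂ) * (y * I) ^ 2 - (s : ℂ) * (y * I) + I * c =
      ((y ^ 2 * (y ^ 2 - α) : ℝ) : ℂ) + ((c - s * y : ℝ) : ℂ) * I := by
    push_cast
    linear_combination (y ^ 4 * (I ^ 2 - 1) + α * y ^ 2 : ℂ) * I_sq
  rw [hsplit, add_mul_I_eq_zero_iff, sub_eq_zero]

lemma abs_le_sqrt_of_sq_mul_sq_sub_eq_zero {α y : ℝ} (h : y ^ 2 * (y ^ 2 - α) = 0) :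
    |y| ≤ Real.sqrt α := by
  rcases mul_eq_zero.mp h with hy | hy
  · rw [pow_eq_zero_iff two_ne_zero |>.mp hy, abs_zero]
    exact Real.sqrt_nonneg α
  · rw [← Real.sqrt_sq_eq_abs, sub_eq_zero.mp hy]

theorem no_neutral_modes_general (α s ω : ℝ) (hs : 0 < s) (hω : 0 < ω)
    (hk : Real.sqrt α < ω / s) (ℓ : ℤ) (ν : ℂ)
    (hroot : ν ^ 4 + (α : ℂ) * ν ^ 2 - (s : ℂ) * ν + Complex.I * (ω : ℂ) * (ℓ : ℂ) = 0)
    (hre : ν.re = 0) :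
    ℓ = 0 ∧ ν = 0 := by
  have hν : ν = ν.im * I := by simpa [hre] using (re_add_im ν).symm
  rw [hν, mul_assoc, ← ofReal_intCast, ← ofReal_mul, dispersion_at_imaginary_iff] at hroot
  obtain ⟨hquartic, hlinear⟩ := hroot
  have hℓ : ℓ = 0 := by
    have hbound : |(ℓ : ℝ)| * ω < 1 * ω := calc
      |(ℓ : ℝ)| * ω = s * |ν.im| := by
        rw [← abs_of_pos hω, ← abs_mul, mul_comm, hlinear, abs_mul, abs_of_pos hs]
      _ ≤ s * Real.sqrt α := by gcongr; exact abs_le_sqrt_of_sq_mul_sq_sub_eq_zero hquartic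
      _ < 1 * ω := by rw [one_mul, ← lt_div_iff₀' hs]; exact hk
    have : |(ℓ : ℝ)| < 1 := lt_of_mul_lt_mul_right hbound hω.le
    exact_mod_cast Int.abs_lt_one_iff.mp (by exact_mod_cast this)
  have him : ν.im = 0 := by simpa [hℓ, hs.ne'] using hlinear.symm
  exact ⟨hℓ, Complex.ext hre him⟩

/-- For α > 0, s, ω > 0 with k = ω/s > √α, the only purely imaginary
root of ν⁴ + αν² − sν + iωℓ = 0 is ν = 0 with ℓ = 0. -/
theorem no_neutral_modes (α s ω : ℝ) (hα : 0 < α) (hs : 0 < s) (hω : 0 < ω)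
    (hk : Real.sqrt α < ω / s) (ℓ : ℤ) (ν : ℂ)
    (hroot : ν ^ 4 + (α : ℂ) * ν ^ 2 - (s : ℂ) * ν + Complex.I * (ω : ℂ) * (ℓ : ℂ) = 0)
    (hre : ν.re = 0) :
    ℓ = 0 ∧ ν = 0 :=
  no_neutral_modes_general α s ω hs hω hk ℓ ν hroot hre
end

section
/- Let α > 0, s > 0, ω > 0 with ω/s > √α, and let ℓ ∈ ℤ with ℓ ≠ 0. Then the quartic polynomial P(X) = X⁴ + α·X² − s·X + iωℓ ∈ ℂ[X] has no roots on the imaginary axis, and exactly two of its roots (counted with multiplicity) have positive real part, while the other two have negative real part. -/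
/-!
Deform the linear coefficient: for `t ∈ [0, 1]` the quartic `X⁴ + αX² - tsX + iωℓ` still has no
root on the imaginary axis, since a root `iy` forces `tsy = ωℓ ≠ 0` and then `y² = α`, hence
`t²s²α = ω²ℓ²`, which `√α < ω / s` and `ℓ ≠ 0` exclude. As the roots depend continuously on
the coefficients, the number of roots in the right half-plane, counted with multiplicity, does
not change along the deformation. At `t = 0` the quartic is even, so its roots come in pairs
`±z` and exactly two of them lie in the right half-plane.
-/

open Filter Topology Polynomial Finset

theorem eventually_mem_iff_of_notMem_frontier {X : Type*} [TopologicalSpace X] {U : Set X}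
    {z : X} (hz : z ∉ frontier U) : ∀ᶠ y in 𝓝 z, (y ∈ U ↔ z ∈ U) := by
  by_cases hzU : z ∈ U
  · filter_upwards [mem_interior_iff_mem_nhds.mp ((mem_interior_iff_notMem_frontier hzU).mpr hz)]
      with y hy using iff_of_true hy hzU
  · rw [← frontier_compl] at hz
    filter_upwards [mem_interior_iff_mem_nhds.mp ((mem_interior_iff_notMem_frontier hzU).mpr hz)]
      with y hy using iff_of_false hy hzU

namespace Polynomial

theorem exists_eq_prod_X_sub_C {K : Type*} [Field K] [IsAlgClosed K] {p : K[X]} (hp : p.Monic)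
    {d : ℕ} (hd : p.natDegree = d) : ∃ z : Fin d → K, p = ∏ i, (X - C (z i)) := by
  obtain ⟨l, hl⟩ := Quot.exists_rep p.roots
  have hlen : l.length = d := by
    rw [← hd, ← IsAlgClosed.card_roots_eq_natDegree, ← hl]; rfl
  subst hlen
  refine ⟨l.get, ?_⟩
  have hroots : p.roots = univ.val.map l.get := by
    rw [Fin.univ_val_map, List.ofFn_get]; exact hl.symm
  conv_lhs => rw [(IsAlgClosed.splits p).eq_prod_roots_of_monic hp, hroots, Multiset.map_map]
  rfl

theorem isRoot_prod_X_sub_C {R ι : Type*} [CommRing R] [IsDomain R] [Fintype ι] (z : ι → R)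
    (i : ι) : (∏ j, (X - C (z j))).IsRoot (z i) :=
  (isRoot_prod _ _ _).mpr ⟨i, mem_univ i, root_X_sub_C.mpr rfl⟩

theorem card_filter_roots_prod_X_sub_C {R ι : Type*} [CommRing R] [IsDomain R] [Fintype ι]
    (z : ι → R) (P : R → Prop) [DecidablePred P] :
    Multiset.card ((∏ i, (X - C (z i))).roots.filter P) = #{i | P (z i)} := by
  have hprod : ∏ i, (X - C (z i)) = ((univ.val.map z).map fun a => X - C a).prod := by
    rw [Multiset.map_map]; rfl
  rw [hprod, roots_multiset_prod_X_sub_C, Multiset.filter_map, Multiset.card_map]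
  rfl

theorem continuous_coeff_prod {R T ι : Type*} [CommSemiring R] [TopologicalSpace R]
    [IsTopologicalSemiring R] [TopologicalSpace T] (s : Finset ι) {q : ι → T → R[X]}
    (hq : ∀ i ∈ s, ∀ k, Continuous fun t => (q i t).coeff k) (k : ℕ) :
    Continuous fun t => (∏ i ∈ s, q i t).coeff k := by
  classical
  induction s using Finset.induction_on generalizing k with
  | empty => simpa using continuous_const
  | insert j s hj ih =>
    simp only [Finset.prod_insert hj, coeff_mul]
    exact continuous_finsetSum _ fun x _ =>
      (hq j (mem_insert_self j s) x.1).mul (ih (fun i hi => hq i (mem_insert_of_mem hi)) x.2)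

theorem continuous_coeff_prod_X_sub_C {R ι : Type*} [CommRing R] [TopologicalSpace R]
    [IsTopologicalRing R] [Fintype ι] (k : ℕ) :
    Continuous fun z : ι → R => (∏ i, (X - C (z i))).coeff k := by
  refine continuous_coeff_prod _ (fun i _ n => ?_) k
  simp only [coeff_sub, coeff_X, coeff_C]
  split_ifs <;> fun_prop

theorem Monic.norm_lt_sum_norm_coeff_add_one_of_isRoot {K : Type*} [NormedField K] {p : K[X]}
    (hp : p.Monic) {a : K} (h : p.IsRoot a) :
    ‖a‖ < ∑ k ∈ range p.natDegree, ‖p.coeff k‖ + 1 := by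
  have hbound := h.norm_lt_cauchyBound hp.ne_zero
  have hsup : (range p.natDegree).sup (‖p.coeff ·‖₊) ≤ ∑ k ∈ range p.natDegree, ‖p.coeff k‖₊ :=
    Finset.sup_le fun k hk => single_le_sum (f := (‖p.coeff ·‖₊)) (fun _ _ => zero_le) hk
  rw [cauchyBound, hp.leadingCoeff, nnnorm_one, div_one] at hbound
  have := NNReal.coe_lt_coe.mpr (hbound.trans_le (add_le_add_left hsup 1))
  push_cast at this
  exact this

theorem isLocallyConstant_card_filter_roots {T : Type*} [TopologicalSpace T]
    [FirstCountableTopology T] {d : ℕ} {p : T → ℂ[X]} (hmonic : ∀ t, (p t).Monic)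
    (hdeg : ∀ t, (p t).natDegree = d) (hcoeff : ∀ k, Continuous fun t => (p t).coeff k)
    {U : Set ℂ} [DecidablePred (· ∈ U)] (hU : ∀ t z, (p t).IsRoot z → z ∉ frontier U) :
    IsLocallyConstant fun t => Multiset.card ((p t).roots.filter (· ∈ U)) := by
  choose Z hZ using fun t => exists_eq_prod_X_sub_C (hmonic t) (hdeg t)
  rw [IsLocallyConstant.iff_eventually_eq]
  intro t₀
  by_contra hne
  obtain ⟨u, hu, hne⟩ := exists_seq_forall_of_frequently (not_eventually.mp hne)
  obtain ⟨B, hB⟩ : BddAbove (Set.range fun n => ∑ k ∈ range d, ‖(p (u n)).coeff k‖ + 1) :=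
    ((((continuous_finsetSum _ fun k _ => (hcoeff k).norm).add continuous_const).tendsto t₀).comp
      hu).bddAbove_range
  have hZB : ∀ n, Z (u n) ∈ Metric.closedBall 0 B := fun n => by
    refine mem_closedBall_zero_iff.mpr ((pi_norm_le_iff_of_nonneg ?_).mpr fun i => ?_)
    · exact zero_le_one.trans ((le_add_of_nonneg_left (by positivity)).trans (hB ⟨0, rfl⟩))
    · have hroot := (hmonic (u n)).norm_lt_sum_norm_coeff_add_one_of_isRoot
        (hZ (u n) ▸ isRoot_prod_X_sub_C (Z (u n)) i)
      rw [hdeg] at hroot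
      exact hroot.le.trans (hB ⟨n, rfl⟩)
  obtain ⟨z, -, φ, hφ, hlim⟩ := tendsto_subseq_of_bounded Metric.isBounded_closedBall hZB
  have hz : p t₀ = ∏ i, (X - C (z i)) := by
    ext k
    refine tendsto_nhds_unique ((hcoeff k).tendsto t₀ |>.comp (hu.comp hφ.tendsto_atTop)) ?_
    simp only [Function.comp_def, hZ]
    exact ((continuous_coeff_prod_X_sub_C k).tendsto z).comp hlim
  have hsign : ∀ᶠ n in atTop, ∀ i, (Z (u (φ n)) i ∈ U ↔ z i ∈ U) :=
    eventually_all.mpr fun i => (tendsto_pi_nhds.mp hlim i).eventually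
      (eventually_mem_iff_of_notMem_frontier (hU t₀ (z i) (hz ▸ isRoot_prod_X_sub_C z i)))
  obtain ⟨n, hn⟩ := hsign.exists
  apply hne (φ n)
  rw [hZ, hz, card_filter_roots_prod_X_sub_C, card_filter_roots_prod_X_sub_C]
  exact congrArg card (filter_congr fun i _ => hn i)

theorem two_mul_card_filter_roots_re_pos {p : ℂ[X]} (heven : p.comp (-X) = p)
    (haxis : ∀ z, p.IsRoot z → z.re ≠ 0) :
    2 * Multiset.card (p.roots.filter (0 < ·.re)) = p.natDegree := by
  have hneg : p.roots.map (fun z => -z) = p.roots := by rw [← roots_comp_neg_X, heven]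
  have hleft : p.roots.filter (fun z => ¬ 0 < z.re) = (p.roots.filter (0 < ·.re)).map (- ·) := by
    conv_lhs => rw [← hneg]
    rw [Multiset.filter_map]
    refine congrArg _ (Multiset.filter_congr fun z hz => ?_)
    have := haxis z (isRoot_of_mem_roots hz)
    simp only [Function.comp_apply, Complex.neg_re, not_lt, neg_nonpos]
    exact ⟨fun h => h.lt_of_ne this.symm, le_of_lt⟩
  calc 2 * Multiset.card (p.roots.filter (0 < ·.re))
      = Multiset.card (p.roots.filter (0 < ·.re)) +
          Multiset.card (p.roots.filter (fun z => ¬ 0 < z.re)) := by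
        rw [hleft, Multiset.card_map, two_mul]
    _ = p.natDegree := by
        rw [← Multiset.card_add, Multiset.filter_add_not, IsAlgClosed.card_roots_eq_natDegree]

theorem exists_eq_prod_of_card_filter_roots_re_pos {p : ℂ[X]} (hp : p.Monic)
    (hdeg : p.natDegree = 4) (haxis : ∀ z, p.IsRoot z → z.re ≠ 0)
    (hcount : Multiset.card (p.roots.filter (0 < ·.re)) = 2) :
    ∃ z₁ z₂ z₃ z₄ : ℂ, p = (X - C z₁) * (X - C z₂) * (X - C z₃) * (X - C z₄) ∧
      0 < z₁.re ∧ 0 < z₂.re ∧ z₃.re < 0 ∧ z₄.re < 0 := by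
  have hsplit := Multiset.filter_add_not (0 < ·.re) p.roots
  have hcount' : Multiset.card (p.roots.filter (fun z => ¬ 0 < z.re)) = 2 := by
    have := congrArg Multiset.card hsplit
    rw [Multiset.card_add, hcount, IsAlgClosed.card_roots_eq_natDegree, hdeg] at this
    omega
  obtain ⟨z₁, z₂, h₁₂⟩ := Multiset.card_eq_two.mp hcount
  obtain ⟨z₃, z₄, h₃₄⟩ := Multiset.card_eq_two.mp hcount'
  have hpos : ∀ z ∈ p.roots.filter (0 < ·.re), 0 < z.re := fun z hz =>
    (Multiset.mem_filter.mp hz).2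
  have hneg : ∀ z ∈ p.roots.filter (fun z => ¬ 0 < z.re), z.re < 0 := fun z hz =>
    (not_lt.mp (Multiset.mem_filter.mp hz).2).lt_of_ne
      (haxis z (isRoot_of_mem_roots (Multiset.mem_filter.mp hz).1))
  rw [h₁₂] at hpos
  rw [h₃₄] at hneg
  refine ⟨z₁, z₂, z₃, z₄, ?_, hpos z₁ (by simp), hpos z₂ (by simp), hneg z₃ (by simp),
    hneg z₄ (by simp)⟩
  conv_lhs => rw [(IsAlgClosed.splits p).eq_prod_roots_of_monic hp, ← hsplit, h₁₂, h₃₄]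
  simp only [Multiset.insert_eq_cons, Multiset.cons_add, Multiset.singleton_add,
    Multiset.map_cons, Multiset.map_singleton, Multiset.prod_cons, Multiset.prod_singleton]
  ring

noncomputable def depressedQuartic (a b d : ℂ) : ℂ[X] := X ^ 4 + C a * X ^ 2 + C b * X + C d

theorem monic_depressedQuartic (a b d : ℂ) : (depressedQuartic a b d).Monic := by
  unfold depressedQuartic; monicity!

theorem natDegree_depressedQuartic (a b d : ℂ) : (depressedQuartic a b d).natDegree = 4 := by
  unfold depressedQuartic; compute_degree!

theorem continuous_coeff_depressedQuartic (a d : ℂ) (k : ℕ) :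
    Continuous fun b => (depressedQuartic a b d).coeff k := by
  simp only [depressedQuartic, coeff_add, coeff_C_mul]
  fun_prop

theorem depressedQuartic_comp_neg_X (a d : ℂ) :
    (depressedQuartic a 0 d).comp (-X) = depressedQuartic a 0 d := by
  simp only [depressedQuartic, map_zero, zero_mul, add_zero, add_comp, mul_comp, C_comp,
    X_pow_comp]
  ring

theorem re_ne_zero_of_isRoot_depressedQuartic {a b δ : ℝ} (ha : 0 ≤ a) (h : b ^ 2 * a < δ ^ 2)
    {z : ℂ} (hz : (depressedQuartic a b (δ * Complex.I)).IsRoot z) : z.re ≠ 0 := by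
  intro hre
  set y := z.im
  have hzI : z = y * Complex.I := by apply Complex.ext <;> simp [hre, y]
  rw [IsRoot, hzI] at hz
  simp only [depressedQuartic, eval_add, eval_mul, eval_pow, eval_C, eval_X] at hz
  have hparts : ((y ^ 4 - a * y ^ 2 : ℝ) : ℂ) + ((b * y + δ : ℝ) : ℂ) * Complex.I = 0 := by
    push_cast
    linear_combination hz + (y ^ 4 * (1 - Complex.I ^ 2) - a * y ^ 2) * Complex.I_sq
  obtain ⟨hreal, himag⟩ := Complex.ext_iff.mp hparts
  simp only [Complex.add_re, Complex.add_im, Complex.ofReal_re, Complex.ofReal_im,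
    Complex.mul_re, Complex.mul_im, Complex.I_re, Complex.I_im, Complex.zero_re,
    Complex.zero_im, mul_zero, mul_one, sub_zero, add_zero, zero_add] at hreal himag
  have hδ : δ ^ 2 = b ^ 2 * y ^ 2 := by rw [show δ = -(b * y) by linarith]; ring
  rw [hδ] at h
  rcases mul_eq_zero.mp (show y ^ 2 * (y ^ 2 - a) = 0 by linear_combination hreal) with hy | hy
  · rw [hy, mul_zero] at h
    exact (mul_nonneg (sq_nonneg b) ha).not_gt h
  · rw [sub_eq_zero.mp hy] at h
    exact lt_irrefl _ h

end Polynomial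

theorem sq_mul_lt_sq_of_sqrt_lt_div {α s ω t : ℝ} (hα : 0 ≤ α) (hs : 0 < s) (hk : √α < ω / s)
    {ℓ : ℤ} (hℓ : ℓ ≠ 0) (ht : |t| ≤ 1) : (t * s) ^ 2 * α < (ω * ℓ) ^ 2 := by
  have hsα : (s * √α) ^ 2 < ω ^ 2 := by
    rw [lt_div_iff₀ hs, mul_comm] at hk
    exact pow_lt_pow_left₀ hk (by positivity) two_ne_zero
  have hℓ : (1 : ℝ) ≤ ℓ ^ 2 := by
    have := one_le_sq_iff_one_le_abs _ |>.mpr (Int.one_le_abs hℓ)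
    exact_mod_cast this
  have ht : t ^ 2 ≤ 1 := by nlinarith [abs_nonneg t, sq_abs t]
  rw [mul_pow, Real.sq_sqrt hα] at hsα
  nlinarith [sq_nonneg ω, mul_nonneg (sq_nonneg s) hα]

theorem quartic_root_count_general (α s ω : ℝ) (hα : 0 < α) (hs : 0 < s)
    (hk : Real.sqrt α < ω / s) (ℓ : ℤ) (hℓ : ℓ ≠ 0) :
    ∃ z₁ z₂ z₃ z₄ : ℂ,
      (∀ w : ℂ, w ^ 4 + (α : ℂ) * w ^ 2 - (s : ℂ) * w + Complex.I * (ω : ℂ) * (ℓ : ℂ) =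
        (w - z₁) * (w - z₂) * (w - z₃) * (w - z₄)) ∧
      0 < z₁.re ∧ 0 < z₂.re ∧ z₃.re < 0 ∧ z₄.re < 0 := by
  let p : unitInterval → ℂ[X] := fun t =>
    depressedQuartic α ((-(t * s) : ℝ) : ℂ) (((ω * ℓ : ℝ) : ℂ) * Complex.I)
  have haxis : ∀ t z, (p t).IsRoot z → z.re ≠ 0 := fun t z =>
    re_ne_zero_of_isRoot_depressedQuartic hα.le <| by
      rw [neg_sq]
      exact sq_mul_lt_sq_of_sqrt_lt_div hα.le hs hk hℓ (abs_le.mpr ⟨by linarith [t.2.1], t.2.2⟩)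
  have hconst := (isLocallyConstant_card_filter_roots (p := p) (U := {z | 0 < z.re})
    (fun t => monic_depressedQuartic _ _ _) (fun t => natDegree_depressedQuartic _ _ _)
    (fun k => (continuous_coeff_depressedQuartic _ _ k).comp (by fun_prop))
    fun t z hz hfr => haxis t z hz
      (frontier_lt_subset_eq continuous_const Complex.continuous_re hfr).symm
    ).apply_eq_of_preconnectedSpace 0 1
  have heven : (p 0).comp (-X) = p 0 := by
    simpa [p] using depressedQuartic_comp_neg_X (α : ℂ) (((ω * ℓ : ℝ) : ℂ) * Complex.I)
  have hcount₀ := two_mul_card_filter_roots_re_pos heven (haxis 0)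
  rw [natDegree_depressedQuartic] at hcount₀
  have hcount₁ : Multiset.card ((p 1).roots.filter (0 < ·.re)) = 2 := by
    have h01 : Multiset.card ((p 0).roots.filter (0 < ·.re)) =
      Multiset.card ((p 1).roots.filter (0 < ·.re)) := hconst
    omega
  obtain ⟨z₁, z₂, z₃, z₄, hfac, hsigns⟩ := exists_eq_prod_of_card_filter_roots_re_pos
    (monic_depressedQuartic _ _ _) (natDegree_depressedQuartic _ _ _) (haxis 1) hcount₁
  refine ⟨z₁, z₂, z₃, z₄, fun w => ?_, hsigns⟩
  have := congrArg (eval w) hfac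
  simp only [depressedQuartic, Set.Icc.coe_one, eval_add, eval_sub, eval_mul, eval_pow, eval_X,
    eval_C] at this
  push_cast at this
  linear_combination this

/-- For α > 0, s, ω > 0 with ω/s > √α and ℓ ≠ 0, the quartic
X⁴ + αX² − sX + iωℓ has no purely imaginary roots: exactly two roots (with
multiplicity) have positive real part and two have negative real part. -/
theorem quartic_root_count (α s ω : ℝ) (hα : 0 < α) (hs : 0 < s) (hω : 0 < ω)
    (hk : Real.sqrt α < ω / s) (ℓ : ℤ) (hℓ : ℓ ≠ 0) :
    ∃ z₁ z₂ z₃ z₄ : ℂ,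
      (∀ w : ℂ, w ^ 4 + (α : ℂ) * w ^ 2 - (s : ℂ) * w + Complex.I * (ω : ℂ) * (ℓ : ℂ) =
        (w - z₁) * (w - z₂) * (w - z₃) * (w - z₄)) ∧
      0 < z₁.re ∧ 0 < z₂.re ∧ z₃.re < 0 ∧ z₄.re < 0 :=
  quartic_root_count_general α s ω hα hs hk ℓ hℓ
end

section
/- Let α > 0 and define a = −√((√7−1)/24)·α^{1/2}, b = √((√7+3)/8)·α^{1/2}, and s_lin = (2/(3√6))·(2+√7)·√(√7−1)·α^{3/2}. For t ∈ ℝ set ν = a + i·t and f(t) = Re( −ν⁴ − α·ν² + s_lin·ν ). Then f(t) ≤ 0 for all t ∈ ℝ, with equality if and only if t = b or t = −b. -/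
/-!
On the vertical line `ν = a + i t` the growth rate is the even quartic
`-t⁴ + (6a² + α) t² - (a⁴ + α a² - s a)` in `t`. For the values of `a` and `s_lin` at the
linear spreading speed its coefficients are those of `-(t² - b²)²`: a perfect square with
double roots at `t = ±b`.
-/

open Complex

lemma re_dispersion_vertical_line (α s a t : ℝ) :
    (-((a : ℂ) + I * t) ^ 4 - (α : ℂ) * ((a : ℂ) + I * t) ^ 2 + (s : ℂ) * ((a : ℂ) + I * t)).re
      = -t ^ 4 + (6 * a ^ 2 + α) * t ^ 2 - (a ^ 4 + α * a ^ 2 - s * a) := by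
  simp [pow_succ, mul_re, mul_im]
  ring

lemma re_dispersion_vertical_line_eq_neg_sq {α s a b : ℝ} (hquad : 6 * a ^ 2 + α = 2 * b ^ 2)
    (hconst : a ^ 4 + α * a ^ 2 - s * a = b ^ 4) (t : ℝ) :
    (-((a : ℂ) + I * t) ^ 4 - (α : ℂ) * ((a : ℂ) + I * t) ^ 2 + (s : ℂ) * ((a : ℂ) + I * t)).re
      = -(t ^ 2 - b ^ 2) ^ 2 := by
  rw [re_dispersion_vertical_line, hquad, hconst]
  ring

lemma neg_sq_sq_sub_sq_eq_zero_iff {t b : ℝ} : -(t ^ 2 - b ^ 2) ^ 2 = 0 ↔ t = b ∨ t = -b := by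
  rw [neg_eq_zero, pow_eq_zero_iff two_ne_zero, sub_eq_zero, sq_eq_sq_iff_eq_or_eq_neg]

section SpreadingSpeed

open Real

variable {α : ℝ}

lemma sq_re_nu_lin (hα : 0 ≤ α) :
    (-√((√7 - 1) / 24) * √α) ^ 2 = (√7 - 1) / 24 * α := by
  have h7 : 1 ≤ √7 := by rw [show (1 : ℝ) = √1 by simp]; gcongr; norm_num
  rw [mul_pow, neg_sq, sq_sqrt (by linarith), sq_sqrt hα]

lemma sq_im_nu_lin (hα : 0 ≤ α) :
    (√((√7 + 3) / 8) * √α) ^ 2 = (√7 + 3) / 8 * α := by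
  rw [mul_pow, sq_sqrt (by positivity), sq_sqrt hα]

lemma s_lin_mul_re_nu_lin (hα : 0 ≤ α) :
    2 / (3 * √6) * (2 + √7) * √(√7 - 1) * α ^ ((3 : ℝ) / 2) * (-√((√7 - 1) / 24) * √α)
      = -((√7 + 5) / 18) * α ^ 2 := by
  have h7 : √7 ^ 2 = 7 := sq_sqrt (by norm_num)
  have h7ge : 1 ≤ √7 := by nlinarith [sqrt_nonneg 7]
  have h6 : √6 * √((√7 - 1) / 24) = √(√7 - 1) / 2 := by
    rw [← sqrt_mul (by norm_num), show 6 * ((√7 - 1) / 24) = (√7 - 1) / 2 ^ 2 by ring,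
      sqrt_div' _ (by positivity), sqrt_sq (by norm_num)]
  have hroot : √(√7 - 1) ^ 2 = √7 - 1 := sq_sqrt (by linarith)
  have hpow : α ^ ((3 : ℝ) / 2) * √α = α ^ 2 := by
    rw [sqrt_eq_rpow, ← rpow_add' hα (by norm_num)]
    norm_num
  have h6ne : √6 ≠ 0 := by positivity
  calc 2 / (3 * √6) * (2 + √7) * √(√7 - 1) * α ^ ((3 : ℝ) / 2) * (-√((√7 - 1) / 24) * √α)
      = -(2 / (3 * √6 ^ 2)) * (2 + √7) * √(√7 - 1) * (√6 * √((√7 - 1) / 24))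
          * (α ^ ((3 : ℝ) / 2) * √α) := by
        field_simp
    _ = -((√7 + 5) / 18) * α ^ 2 := by
        rw [h6, hpow, sq_sqrt (by norm_num : (0 : ℝ) ≤ 6)]
        linear_combination (-(2 + √7) / 18 * α ^ 2) * hroot + (-α ^ 2 / 18) * h7

end SpreadingSpeed

/-- Along the vertical line Re ν = a = Re ν_lin in the complex plane,
the temporal growth rate f(t) = Re(−ν⁴ − αν² + s_lin ν), ν = a + it, is nonpositive
and vanishes exactly at t = ±b, where b = Im ν_lin. -/
theorem marginal_stability_line (α : ℝ) (hα : 0 < α)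
    (a b s_lin : ℝ)
    (ha : a = -(Real.sqrt ((Real.sqrt 7 - 1) / 24)) * Real.sqrt α)
    (hb : b = Real.sqrt ((Real.sqrt 7 + 3) / 8) * Real.sqrt α)
    (hs : s_lin = (2 / (3 * Real.sqrt 6)) * (2 + Real.sqrt 7) *
      Real.sqrt (Real.sqrt 7 - 1) * α ^ ((3 : ℝ) / 2))
    (f : ℝ → ℝ)
    (hf : ∀ t : ℝ, f t =
      (-((a : ℂ) + Complex.I * (t : ℂ)) ^ 4 - (α : ℂ) * ((a : ℂ) + Complex.I * (t : ℂ)) ^ 2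
        + (s_lin : ℂ) * ((a : ℂ) + Complex.I * (t : ℂ))).re) :
    ∀ t : ℝ, f t ≤ 0 ∧ (f t = 0 ↔ t = b ∨ t = -b) := by
  have h7 : Real.sqrt 7 ^ 2 = 7 := Real.sq_sqrt (by norm_num)
  have ha2 : a ^ 2 = (Real.sqrt 7 - 1) / 24 * α := ha ▸ sq_re_nu_lin hα.le
  have hb2 : b ^ 2 = (Real.sqrt 7 + 3) / 8 * α := hb ▸ sq_im_nu_lin hα.le
  have hsa : s_lin * a = -((Real.sqrt 7 + 5) / 18) * α ^ 2 := ha ▸ hs ▸ s_lin_mul_re_nu_lin hα.le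
  have hquad : 6 * a ^ 2 + α = 2 * b ^ 2 := by rw [ha2, hb2]; ring
  have hconst : a ^ 4 + α * a ^ 2 - s_lin * a = b ^ 4 := by
    rw [show a ^ 4 = (a ^ 2) ^ 2 by ring, show b ^ 4 = (b ^ 2) ^ 2 by ring, ha2, hb2, hsa]
    linear_combination (-α ^ 2 / 72) * h7
  intro t
  rw [hf t, re_dispersion_vertical_line_eq_neg_sq hquad hconst t]
  exact ⟨neg_nonpos.mpr (sq_nonneg _), neg_sq_sq_sub_sq_eq_zero_iff⟩
end

section
/- Let α > 0 and define k_temp = √(α/2), k_lin = 3·(3+√7)/(8·√(5+√7))·α^{1/2}, b_lin = √((√7+3)/8)·α^{1/2}, and k_max = √α. Then the exact strict inequalities k_temp < k_lin < b_lin < k_max hold; equivalently, √(1/2) < 3(3+√7)/(8√(5+√7)) < √((3+√7)/8) < 1. -/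
/-- Ordering of the characteristic wavenumbers:
k_temp < k_lin < Im ν_lin < k_max. -/
theorem wavenumber_ordering (α : ℝ) (hα : 0 < α)
    (k_temp k_lin b_lin k_max : ℝ)
    (htemp : k_temp = Real.sqrt (α / 2))
    (hlin : k_lin = 3 * (3 + Real.sqrt 7) / (8 * Real.sqrt (5 + Real.sqrt 7)) * Real.sqrt α)
    (hb : b_lin = Real.sqrt ((Real.sqrt 7 + 3) / 8) * Real.sqrt α)
    (hmax : k_max = Real.sqrt α) :
    k_temp < k_lin ∧ k_lin < b_lin ∧ b_lin < k_max := by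
  subst htemp hlin hb hmax
  set s := Real.sqrt 7 with hsdef
  have hs7 : s ^ 2 = 7 := Real.sq_sqrt (by norm_num)
  have hs0 : 0 ≤ s := Real.sqrt_nonneg 7
  have hs_lb : 2 < s := by nlinarith
  have hs_ub : s < 3 := by nlinarith
  have ha : 0 < Real.sqrt α := Real.sqrt_pos.mpr hα
  set t := Real.sqrt (5 + s) with htdef
  have ht2 : t ^ 2 = 5 + s := Real.sq_sqrt (by linarith)
  have htpos : 0 < t := Real.sqrt_pos.mpr (by linarith)
  set u := Real.sqrt ((s + 3) / 8) with hudef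
  have hu2 : u ^ 2 = (s + 3) / 8 := Real.sq_sqrt (by linarith)
  have hupos : 0 < u := Real.sqrt_pos.mpr (by linarith)
  have hw2 : (Real.sqrt 2) ^ 2 = 2 := Real.sq_sqrt (by norm_num)
  have hwpos : 0 < Real.sqrt 2 := Real.sqrt_pos.mpr (by norm_num)
  have hdiv : Real.sqrt (α / 2) = Real.sqrt α / Real.sqrt 2 := Real.sqrt_div hα.le 2
  refine ⟨?_, ?_, ?_⟩
  · -- k_temp < k_lin
    rw [hdiv]
    have h12 : 1 / Real.sqrt 2 < 3 * (3 + s) / (8 * t) := by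
      rw [div_lt_div_iff₀ hwpos (by positivity)]
      have := lt_of_pow_lt_pow_left₀ 2 (by positivity : (0:ℝ) ≤ 3 * (3 + s) * Real.sqrt 2)
        (by nlinarith : (1 * (8 * t)) ^ 2 < (3 * (3 + s) * Real.sqrt 2) ^ 2)
      linarith
    calc Real.sqrt α / Real.sqrt 2 = 1 / Real.sqrt 2 * Real.sqrt α := by ring
      _ < 3 * (3 + s) / (8 * t) * Real.sqrt α := by
          exact mul_lt_mul_of_pos_right h12 ha
  · -- k_lin < b_lin
    have h23 : 3 * (3 + s) / (8 * t) < u := by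
      rw [div_lt_iff₀ (by positivity)]
      exact lt_of_pow_lt_pow_left₀ 2 (by positivity)
        (by nlinarith : (3 * (3 + s)) ^ 2 < (u * (8 * t)) ^ 2)
    exact mul_lt_mul_of_pos_right h23 ha
  · -- b_lin < k_max
    have h34 : u < 1 := lt_of_pow_lt_pow_left₀ 2 (by norm_num) (by nlinarith)
    calc u * Real.sqrt α < 1 * Real.sqrt α := mul_lt_mul_of_pos_right h34 ha
      _ = Real.sqrt α := one_mul _
end
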